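/- arXiv:2311.04136 — 5 statements merged into one kernel-verified Lean document; each statement's English description precedes it below -/
import Mathlib

section
/- Let S = K[x_1,…,x_n] be a polynomial ring over a field K of prime characteristic p and let q = p^e be a power of p. Then for any ideals I, J ⊆ S, (I : J)^{[q]} = I^{[q]} : J^{[q]}. -/
open MvPolynomial

attribute [local instance] MvPolynomial.gradedAlgebra

namespace Stmt3Aux

/-! ### Nat arithmetic helpers -/

lemma nat_mod_char {q α μ : ℕ} (hα : α < q) :
    (α ≤ μ ∧ (μ - α) % q = 0) ↔ α = μ % q := by
  constructor
  · rintro ⟨h1, h2⟩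
    obtain ⟨k, hk⟩ := Nat.dvd_of_mod_eq_zero h2
    have hμ : μ = q * k + α := by
      have := Nat.eq_add_of_sub_eq h1 hk
      omega
    rw [hμ, Nat.mul_add_mod, Nat.mod_eq_of_lt hα]
  · rintro rfl
    refine ⟨Nat.mod_le _ _, ?_⟩
    have h : μ - μ % q = q * (μ / q) :=
      Nat.sub_eq_of_eq_add (Nat.div_add_mod μ q).symm
    rw [h]
    exact Nat.mul_mod_right _ _

lemma nat_mod_reconstruct {q α μ : ℕ} (hα : α < q) (h : α = μ % q) :
    q * ((μ - α) / q) + α = μ := by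
  subst h
  have h : μ - μ % q = q * (μ / q) :=
    Nat.sub_eq_of_eq_add (Nat.div_add_mod μ q).symm
  rw [h, Nat.mul_div_cancel_left _ (by omega : 0 < q)]
  exact Nat.div_add_mod μ q

lemma nat_mul_le {q α β μ : ℕ} (hα : α < q) : q * μ ≤ q * β + α ↔ μ ≤ β := by
  constructor
  · intro h
    by_contra hc
    push_neg at hc
    have h2 : q * (β + 1) ≤ q * μ := Nat.mul_le_mul_left q hc
    rw [Nat.mul_add, Nat.mul_one] at h2
    omega
  · intro h
    exact le_trans (Nat.mul_le_mul_left q h) (Nat.le_add_right _ _)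

lemma nat_mul_sub {q α β μ : ℕ} (h : μ ≤ β) :
    (q * β + α) - q * μ = q * (β - μ) + α := by
  have h2 : q * μ ≤ q * β := Nat.mul_le_mul_left q h
  rw [Nat.sub_add_comm h2, Nat.mul_sub]

/-! ### Finsupp div/mod -/

variable {n : ℕ}

noncomputable def qdiv (q : ℕ) (m : Fin n →₀ ℕ) : Fin n →₀ ℕ :=
  m.mapRange (· / q) (Nat.zero_div q)

noncomputable def qmod (q : ℕ) (m : Fin n →₀ ℕ) : Fin n →₀ ℕ :=
  m.mapRange (· % q) (Nat.zero_mod q)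

@[simp] lemma qdiv_apply (q : ℕ) (m : Fin n →₀ ℕ) (i : Fin n) : qdiv q m i = m i / q :=
  Finsupp.mapRange_apply

@[simp] lemma qmod_apply (q : ℕ) (m : Fin n →₀ ℕ) (i : Fin n) : qmod q m i = m i % q :=
  Finsupp.mapRange_apply

lemma qdiv_smul {q : ℕ} (hq0 : 0 < q) (b : Fin n →₀ ℕ) : qdiv q (q • b) = b := by
  ext i
  rw [qdiv_apply, Finsupp.smul_apply, smul_eq_mul, Nat.mul_div_cancel_left _ hq0]

lemma qdiv_add_qmod (q : ℕ) (m : Fin n →₀ ℕ) : q • qdiv q m + qmod q m = m := by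
  ext i
  simp only [Finsupp.add_apply, Finsupp.smul_apply, qdiv_apply, qmod_apply, smul_eq_mul]
  exact Nat.div_add_mod (m i) q

lemma qmod_smul {q : ℕ} (b : Fin n →₀ ℕ) : qmod q (q • b) = 0 := by
  ext i
  simp only [qmod_apply, Finsupp.smul_apply, smul_eq_mul, Finsupp.coe_zero, Pi.zero_apply]
  exact Nat.mul_mod_right _ _

lemma qmod_lt {q : ℕ} (hq0 : 0 < q) (m : Fin n →₀ ℕ) (i : Fin n) : qmod q m i < q := by
  rw [qmod_apply]; exact Nat.mod_lt _ hq0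

lemma finsupp_mod_char {q : ℕ} {a m : Fin n →₀ ℕ} (ha : ∀ i, a i < q) :
    (a ≤ m ∧ qmod q (m - a) = 0) ↔ a = qmod q m := by
  rw [Finsupp.le_def, Finsupp.ext_iff, Finsupp.ext_iff]
  simp only [qmod_apply, Finsupp.tsub_apply, Finsupp.coe_zero, Pi.zero_apply]
  rw [← forall_and]
  exact forall_congr' fun i => nat_mod_char (ha i)

lemma finsupp_mod_reconstruct {q : ℕ} {a m : Fin n →₀ ℕ} (ha : ∀ i, a i < q)
    (h : a = qmod q m) : q • qdiv q (m - a) + a = m := by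
  ext i
  simp only [Finsupp.add_apply, Finsupp.smul_apply, qdiv_apply, Finsupp.tsub_apply, smul_eq_mul]
  exact nat_mod_reconstruct (ha i) (by rw [h, qmod_apply])

lemma finsupp_mul_le {q : ℕ} {a b u : Fin n →₀ ℕ} (ha : ∀ i, a i < q) :
    q • u ≤ q • b + a ↔ u ≤ b := by
  rw [Finsupp.le_def, Finsupp.le_def]
  refine forall_congr' fun i => ?_
  simp only [Finsupp.add_apply, Finsupp.smul_apply, smul_eq_mul]
  exact nat_mul_le (ha i)

lemma finsupp_mul_sub {q : ℕ} {a b u : Fin n →₀ ℕ} (h : u ≤ b) :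
    (q • b + a) - q • u = q • (b - u) + a := by
  ext i
  simp only [Finsupp.add_apply, Finsupp.smul_apply, Finsupp.tsub_apply, smul_eq_mul]
  exact nat_mul_sub (h i)

/-! ### The coordinate operators -/

variable {K : Type*} [Field K] {ι : Type*}

variable (q : ℕ) (rep : K → ι →₀ K)

/-- The `(j, a)` coordinate operator. -/
noncomputable def Dop (j : ι) (a : Fin n →₀ ℕ) (f : MvPolynomial (Fin n) K) :
    MvPolynomial (Fin n) K :=
  ∑ b ∈ f.support.image (fun m => qdiv q (m - a)),
    monomial b (rep (coeff (q • b + a) f) j)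

variable {q : ℕ} {rep : K → ι →₀ K}

section Dop

lemma coeff_Dop (hq0 : 0 < q) (hrep0 : rep 0 = 0) (j : ι) (a : Fin n →₀ ℕ) (f : MvPolynomial (Fin n) K) (b' : Fin n →₀ ℕ) :
    coeff b' (Dop q rep j a f) = rep (coeff (q • b' + a) f) j := by
  rw [Dop, coeff_sum]
  simp_rw [coeff_monomial]
  rw [Finset.sum_ite_eq' _ b' (fun b => rep (coeff (q • b + a) f) j)]
  split_ifs with h
  · rfl
  · by_cases hc : coeff (q • b' + a) f = 0
    · rw [hc, hrep0, Finsupp.zero_apply]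
    · exfalso
      apply h
      apply Finset.mem_image.2
      refine ⟨q • b' + a, mem_support_iff.2 hc, ?_⟩
      rw [add_tsub_cancel_right, qdiv_smul hq0]

lemma Dop_add (hq0 : 0 < q) (hrep0 : rep 0 = 0) (j : ι) (a : Fin n →₀ ℕ)
    (hadd : ∀ c d, rep (c + d) = rep c + rep d)
    (f g : MvPolynomial (Fin n) K) :
    Dop q rep j a (f + g) = Dop q rep j a f + Dop q rep j a g := by
  apply MvPolynomial.ext
  intro b'
  rw [coeff_add, coeff_Dop hq0 hrep0, coeff_Dop hq0 hrep0, coeff_Dop hq0 hrep0,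
    coeff_add, hadd, Finsupp.add_apply]

lemma Dop_zero (hq0 : 0 < q) (hrep0 : rep 0 = 0) (j : ι) (a : Fin n →₀ ℕ) : Dop q rep j a (0 : MvPolynomial (Fin n) K) = 0 := by
  apply MvPolynomial.ext
  intro b'
  rw [coeff_Dop hq0 hrep0, coeff_zero, hrep0, Finsupp.zero_apply, coeff_zero]

end Dop


section F

variable {F : MvPolynomial (Fin n) K →+* MvPolynomial (Fin n) K}

lemma coeff_F (hq0 : 0 < q)
    (hF : ∀ (m : Fin n →₀ ℕ) (c : K), F (monomial m c) = monomial (q • m) (c ^ q))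
    (g : MvPolynomial (Fin n) K) (m' : Fin n →₀ ℕ) :
    coeff m' (F g) = if qmod q m' = 0 then (coeff (qdiv q m') g) ^ q else 0 := by
  conv_lhs => rw [g.as_sum, map_sum]
  simp_rw [hF]
  rw [coeff_sum]
  simp_rw [coeff_monomial]
  by_cases h : qmod q m' = 0
  · rw [if_pos h]
    have key : ∀ m : Fin n →₀ ℕ, (q • m = m') ↔ (m = qdiv q m') := by
      intro m
      constructor
      · rintro rfl; rw [qdiv_smul hq0]
      · rintro rfl
        have := qdiv_add_qmod q m'
        rw [h, add_zero] at this
        exact this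
    simp_rw [key]
    rw [Finset.sum_ite_eq' _ (qdiv q m') (fun m => coeff m g ^ q)]
    split_ifs with h2
    · rfl
    · rw [notMem_support_iff.1 h2, zero_pow hq0.ne']
  · rw [if_neg h]
    apply Finset.sum_eq_zero
    intro m _
    rw [if_neg]
    rintro rfl
    exact h (qmod_smul m)

lemma Dop_semilin (hq0 : 0 < q) (hrep0 : rep 0 = 0)
    (hadd : ∀ c d, rep (c + d) = rep c + rep d)
    (hmul : ∀ (t c : K) (j : ι), rep (t ^ q * c) j = t * rep c j)
    (hF : ∀ (m : Fin n →₀ ℕ) (c : K), F (monomial m c) = monomial (q • m) (c ^ q))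
    (j : ι) {a : Fin n →₀ ℕ} (ha : ∀ i, a i < q)
    (s f : MvPolynomial (Fin n) K) :
    Dop q rep j a (F s * f) = s * Dop q rep j a f := by
  induction s using MvPolynomial.induction_on' with
  | monomial u t =>
    apply MvPolynomial.ext
    intro b'
    rw [hF, coeff_Dop hq0 hrep0, coeff_monomial_mul', coeff_monomial_mul']
    by_cases h : u ≤ b'
    · rw [if_pos ((finsupp_mul_le ha).2 h), if_pos h, finsupp_mul_sub h, hmul,
        coeff_Dop hq0 hrep0]
    · rw [if_neg (fun hc => h ((finsupp_mul_le ha).1 hc)), if_neg h, hrep0, Finsupp.zero_apply]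
  | add s1 s2 ih1 ih2 =>
    rw [map_add, add_mul, Dop_add hq0 hrep0 _ _ hadd, ih1, ih2, add_mul]

lemma Dop_mem (hq0 : 0 < q) (hrep0 : rep 0 = 0)
    (hadd : ∀ c d, rep (c + d) = rep c + rep d)
    (hmul : ∀ (t c : K) (j : ι), rep (t ^ q * c) j = t * rep c j)
    (hF : ∀ (m : Fin n →₀ ℕ) (c : K), F (monomial m c) = monomial (q • m) (c ^ q))
    (j : ι) {a : Fin n →₀ ℕ} (ha : ∀ i, a i < q)
    (I : Ideal (MvPolynomial (Fin n) K)) {f : MvPolynomial (Fin n) K}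
    (hf : f ∈ Ideal.map F I) :
    Dop q rep j a f ∈ I := by
  have key : ∀ x ∈ Ideal.map F I, ∀ s : MvPolynomial (Fin n) K,
      Dop q rep j a (s * x) ∈ I := by
    intro x hx
    refine Submodule.span_induction ?_ ?_ ?_ ?_ hx
    · rintro _ ⟨i, hi, rfl⟩ s
      rw [mul_comm, Dop_semilin hq0 hrep0 hadd hmul hF j ha]
      exact I.mul_mem_right _ hi
    · intro s
      rw [mul_zero, Dop_zero hq0 hrep0]
      exact I.zero_mem
    · intro x y _ _ ihx ihy s
      rw [mul_add, Dop_add hq0 hrep0 _ _ hadd]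
      exact I.add_mem (ihx s) (ihy s)
    · intro r x _ ihx s
      rw [smul_eq_mul, ← mul_assoc]
      exact ihx (s * r)
  have := key f hf 1
  rwa [one_mul] at this

lemma Dop_recon (hq0 : 0 < q) (hrep0 : rep 0 = 0)
    (bb : ι → K)
    (hsum : ∀ c : K, ((rep c).sum fun j r => r ^ q * bb j) = c)
    (hF : ∀ (m : Fin n →₀ ℕ) (c : K), F (monomial m c) = monomial (q • m) (c ^ q))
    (I' : Ideal (MvPolynomial (Fin n) K)) (f : MvPolynomial (Fin n) K)
    (h : ∀ (j : ι) (a : Fin n →₀ ℕ), (∀ i, a i < q) → Dop q rep j a f ∈ I') :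
    f ∈ Ideal.map F I' := by
  classical
  set A : Finset (Fin n →₀ ℕ) := f.support.image (qmod q) with hA
  set JT : Finset ι := f.support.biUnion (fun m => (rep (coeff m f)).support) with hJT
  have key : f = ∑ x ∈ JT ×ˢ A, F (Dop q rep x.1 x.2 f) * monomial x.2 (bb x.1) := by
    apply MvPolynomial.ext
    intro m
    rw [coeff_sum]
    have hterm : ∀ j : ι, ∀ a ∈ A,
        coeff m (F (Dop q rep j a f) * monomial a (bb j)) =
          if a = qmod q m then (rep (coeff m f) j) ^ q * bb j else 0 := by
      intro j a haA
      have ha : ∀ i, a i < q := by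
        obtain ⟨m₀, _, rfl⟩ := Finset.mem_image.1 haA
        exact fun i => qmod_lt hq0 m₀ i
      rw [coeff_mul_monomial', coeff_F hq0 hF]
      by_cases hcond : a = qmod q m
      · have h2 := (finsupp_mod_char ha).2 hcond
        rw [if_pos hcond, if_pos h2.1, if_pos h2.2, coeff_Dop hq0 hrep0,
          finsupp_mod_reconstruct ha hcond]
      · rw [if_neg hcond]
        by_cases hle : a ≤ m
        · rw [if_pos hle, if_neg, zero_mul]
          intro hmod
          exact hcond ((finsupp_mod_char ha).1 ⟨hle, hmod⟩)
        · rw [if_neg hle]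
    rw [Finset.sum_product]
    have hinner : ∀ j : ι,
        (∑ a ∈ A, coeff m (F (Dop q rep j a f) * monomial a (bb j))) =
          if qmod q m ∈ A then (rep (coeff m f) j) ^ q * bb j else 0 := by
      intro j
      rw [Finset.sum_congr rfl (fun a haA => hterm j a haA)]
      exact Finset.sum_ite_eq' A (qmod q m) (fun _ => (rep (coeff m f) j) ^ q * bb j)
    rw [Finset.sum_congr rfl (fun j _ => hinner j)]
    by_cases hm : m ∈ f.support
    · have hmA : qmod q m ∈ A := Finset.mem_image_of_mem _ hm
      simp_rw [if_pos hmA]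
      have hsub : (rep (coeff m f)).support ⊆ JT :=
        fun j hj => Finset.mem_biUnion.2 ⟨m, hm, hj⟩
      conv_lhs => rw [← hsum (coeff m f)]
      rw [Finsupp.sum]
      refine Finset.sum_subset hsub ?_
      intro j _ hj
      rw [Finsupp.notMem_support_iff.1 hj, zero_pow hq0.ne', zero_mul]
    · have hc0 : coeff m f = 0 := notMem_support_iff.1 hm
      rw [hc0]
      symm
      apply Finset.sum_eq_zero
      intro j _
      rw [hrep0, Finsupp.zero_apply, zero_pow hq0.ne', zero_mul, ite_self]
  rw [key]
  apply Ideal.sum_mem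
  rintro ⟨j, a⟩ hx
  have ha : ∀ i, a i < q := by
    have haA : a ∈ A := (Finset.mem_product.1 hx).2
    obtain ⟨m₀, _, rfl⟩ := Finset.mem_image.1 haA
    exact fun i => qmod_lt hq0 m₀ i
  exact Ideal.mul_mem_right _ _ (Ideal.mem_map_of_mem F (h j a ha))
theorem core_colon (hq0 : 0 < q) (hrep0 : rep 0 = 0)
    (hadd : ∀ c d, rep (c + d) = rep c + rep d)
    (hmul : ∀ (t c : K) (j : ι), rep (t ^ q * c) j = t * rep c j)
    (bb : ι → K)
    (hsum : ∀ c : K, ((rep c).sum fun j r => r ^ q * bb j) = c)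
    (hF : ∀ (m : Fin n →₀ ℕ) (c : K), F (monomial m c) = monomial (q • m) (c ^ q))
    (I J : Ideal (MvPolynomial (Fin n) K)) :
    Ideal.map F (I.colon J) = (Ideal.map F I).colon (Ideal.map F J) := by
  apply le_antisymm
  · rw [Ideal.map_le_iff_le_comap]
    intro g hg
    rw [Ideal.mem_comap, Submodule.mem_colon]
    intro y hy
    rw [smul_eq_mul]
    have hy' : y ∈ Submodule.span _ (F '' (J : Set (MvPolynomial (Fin n) K))) := hy
    refine Submodule.span_induction ?_ ?_ ?_ ?_ hy'
    · rintro _ ⟨jj, hjj, rfl⟩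
      rw [← map_mul]
      exact Ideal.mem_map_of_mem F (smul_eq_mul g jj ▸
        Submodule.mem_colon.1 hg jj hjj)
    · rw [mul_zero]; exact Ideal.zero_mem _
    · intro x y _ _ hx' hy''
      rw [mul_add]; exact Ideal.add_mem _ hx' hy''
    · intro r x _ hx'
      rw [smul_eq_mul, mul_comm r x, ← mul_assoc]
      exact Ideal.mul_mem_right _ _ hx'
  · intro g hg
    refine Dop_recon hq0 hrep0 bb hsum hF _ g ?_
    intro j a ha
    rw [Submodule.mem_colon]
    intro jj hjj
    rw [smul_eq_mul]
    have h1 : g * F jj ∈ Ideal.map F I := by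
      have h2 : F jj ∈ Ideal.map F J := Ideal.mem_map_of_mem F hjj
      have := Submodule.mem_colon.1 hg (F jj) h2
      rwa [smul_eq_mul] at this
    have h2 := Dop_mem hq0 hrep0 hadd hmul hF j ha I (mul_comm g (F jj) ▸ h1)
    rw [Dop_semilin hq0 hrep0 hadd hmul hF j ha] at h2
    rw [mul_comm]
    exact h2

end F

end Stmt3Aux


universe u

lemma Stmt3Aux.exists_rep {K : Type u} [Field K] (σ : K →+* K) :
    ∃ (ι : Type u) (bb : ι → K) (rep : K → (ι →₀ K)),
      (∀ c d, rep (c + d) = rep c + rep d) ∧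
      (∀ (t c : K) (j : ι), rep (σ t * c) j = t * rep c j) ∧
      (∀ c : K, ((rep c).sum fun j r => σ r * bb j) = c) := by
  letI m : Module K K := Module.compHom K σ
  let b := @Module.Basis.ofVectorSpace K K _ _ m
  refine ⟨↥(Module.Basis.ofVectorSpaceIndex K K), fun j => b j, ⇑b.repr, ?_, ?_, ?_⟩
  · intro c d; exact map_add b.repr c d
  · intro t c j
    have h1 : σ t * c = @HSMul.hSMul K K K (@instHSMul K K m.toSMul) t c := rfl
    rw [h1, b.repr.map_smul, Finsupp.smul_apply, smul_eq_mul]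
  · intro c
    have h := b.linearCombination_repr c
    rw [Finsupp.linearCombination_apply] at h
    conv_rhs => rw [← h]
    apply Finsupp.sum_congr
    intro j hj
    show σ _ * _ = @HSMul.hSMul K K K (@instHSMul K K m.toSMul) _ _
    rfl



noncomputable section

variable {K : Type*} [Field K] {n : ℕ}

/-- The `q`-th Frobenius power `I^{[q]}` of an ideal. -/
def frobPow (I : Ideal (MvPolynomial (Fin n) K)) (q : ℕ) : Ideal (MvPolynomial (Fin n) K) :=
  Ideal.span ((fun a => a ^ q) '' (I : Set (MvPolynomial (Fin n) K)))

/-- The associated primes of `S/I`. -/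
def Ass (I : Ideal (MvPolynomial (Fin n) K)) : Set (Ideal (MvPolynomial (Fin n) K)) :=
  associatedPrimes (MvPolynomial (Fin n) K) (MvPolynomial (Fin n) K ⧸ I)

/-- The v-number of a graded ideal. -/
def vnum (I : Ideal (MvPolynomial (Fin n) K)) : ℕ :=
  sInf {d : ℕ | ∃ f : MvPolynomial (Fin n) K, f.IsHomogeneous d ∧
    ∃ 𝔭 ∈ Ass I, I.colon (Ideal.span {f}) = 𝔭}

/-- The local v-number `v_𝔭(I)`. -/
def vnumLocal (I 𝔭 : Ideal (MvPolynomial (Fin n) K)) : ℕ :=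
  sInf {d : ℕ | ∃ f : MvPolynomial (Fin n) K, f.IsHomogeneous d ∧
    I.colon (Ideal.span {f}) = 𝔭}

/-- The invariant `α_q(I)`. -/
def alphaq (I : Ideal (MvPolynomial (Fin n) K)) (q : ℕ) : ℕ :=
  sInf {d : ℕ | ∃ f : MvPolynomial (Fin n) K, f.IsHomogeneous d ∧
    f ∈ (frobPow I q).colon I ∧ f ∉ frobPow I q}

/-- The height of an ideal: the minimal height of an associated prime. -/
def heightI (I : Ideal (MvPolynomial (Fin n) K)) : ℕ :=
  sInf {h : ℕ | ∃ 𝔭 ∈ Ass I, ∃ h𝔭 : 𝔭.IsPrime,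
    Order.height (⟨𝔭, h𝔭⟩ : PrimeSpectrum (MvPolynomial (Fin n) K)) = (h : ℕ∞)}

/-- The big height of an ideal: the maximal height of an associated prime. -/
def bightI (I : Ideal (MvPolynomial (Fin n) K)) : ℕ :=
  sSup {h : ℕ | ∃ 𝔭 ∈ Ass I, ∃ h𝔭 : 𝔭.IsPrime,
    Order.height (⟨𝔭, h𝔭⟩ : PrimeSpectrum (MvPolynomial (Fin n) K)) = (h : ℕ∞)}

/-- A graded (homogeneous) ideal with respect to the standard grading. -/
def IsGraded (I : Ideal (MvPolynomial (Fin n) K)) : Prop :=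
  Ideal.IsHomogeneous (homogeneousSubmodule (Fin n) K) I

/-- A monomial ideal. -/
def IsMonomialIdeal (I : Ideal (MvPolynomial (Fin n) K)) : Prop :=
  ∃ s : Set (Fin n →₀ ℕ), I = Ideal.span ((fun a => monomial a (1 : K)) '' s)

theorem stmt3 {K : Type*} [Field K] {n : ℕ} (p : ℕ) (hp : p.Prime) [CharP K p]
    (q : ℕ) (hq : ∃ e : ℕ, q = p ^ e) (I J : Ideal (MvPolynomial (Fin n) K)) :
    frobPow (I.colon J) q = (frobPow I q).colon (frobPow J q) := by
  classical
  obtain ⟨e, rfl⟩ := hq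
  haveI := Fact.mk hp
  set S := MvPolynomial (Fin n) K
  let Fr : S →+* S := iterateFrobenius S p e
  have hq0 : 0 < p ^ e := pow_pos hp.pos e
  have hF : ∀ (m : Fin n →₀ ℕ) (c : K),
      Fr (monomial m c) = monomial ((p ^ e) • m) (c ^ p ^ e) := by
    intro m c
    rw [show Fr (monomial m c) = (monomial m c) ^ p ^ e from rfl, monomial_pow]
  have hmap : ∀ I : Ideal S, frobPow I (p ^ e) = Ideal.map Fr I := by
    intro I
    rw [frobPow, Ideal.map]
    rfl
  obtain ⟨ι, bb, rep, hadd, hmul, hsum⟩ := Stmt3Aux.exists_rep (iterateFrobenius K p e)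
  have hrep0 : rep 0 = 0 := by
    have h := hadd 0 0
    rw [add_zero] at h
    exact (left_eq_add.1 h).symm ▸ rfl
  have hmul' : ∀ (t c : K) (j : ι), rep (t ^ p ^ e * c) j = t * rep c j := by
    intro t c j
    have : t ^ p ^ e = iterateFrobenius K p e t := rfl
    rw [this]; exact hmul t c j
  have hsum' : ∀ c : K, ((rep c).sum fun j r => r ^ p ^ e * bb j) = c := by
    intro c
    have : (fun (j : ι) (r : K) => r ^ p ^ e * bb j)
        = fun j r => iterateFrobenius K p e r * bb j := rfl
    rw [this]; exact hsum c
  rw [hmap, hmap, hmap]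
  exact Stmt3Aux.core_colon hq0 hrep0 hadd hmul' bb hsum' hF I J


end
end

section
/- Let S = K[x_1,…,x_n] be a standard graded polynomial ring over a field K of prime characteristic p, let I ⊆ S be a proper nonzero graded ideal minimally generated by homogeneous elements g_1,…,g_m, and let q = p^e > 1. Then there exists a homogeneous element f ∈ S with f ∈ (I^{[q]} : I), f ∉ I^{[q]}, and deg f ≤ (q−1)·(deg g_1 + … + deg g_m); in particular α_q(I) ≤ (q−1)·Σ_{i=1}^m deg g_i. -/
/-!
Among the products `∏ gᵢ ^ cᵢ` with all `cᵢ < q` that do not lie in `I^{[q]}` (there is one,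
the empty product, since `I^{[q]} ⊆ I ≠ S`), choose one with `∑ cᵢ` maximal. Multiplying it by any
`gⱼ` either raises an exponent to `q`, producing a multiple of `gⱼ ^ q ∈ I^{[q]}`, or contradicts
maximality; so it lies in `I^{[q]} : I`, and its degree is `∑ cᵢ deg gᵢ ≤ (q - 1) ∑ deg gᵢ`.
-/

open MvPolynomial

attribute [local instance] MvPolynomial.gradedAlgebra

noncomputable section

variable {K : Type*} [Field K] {n : ℕ}

open Finset

theorem prod_pow_add_single {ι R : Type*} [Fintype ι] [DecidableEq ι] [CommMonoid R]
    (g : ι → R) (c : ι → ℕ) (j : ι) :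
    ∏ i, g i ^ (c + Pi.single j 1 : ι → ℕ) i = (∏ i, g i ^ c i) * g j := by
  simp only [Pi.add_apply, pow_add, prod_mul_distrib]
  congr 1
  rw [Fintype.prod_eq_single j fun i hi => by simp [hi]]
  simp

theorem exists_prod_pow_notMem_forall_mul_mem {ι R : Type*} [Fintype ι] [CommSemiring R]
    {J : Ideal R} (hJ : J ≠ ⊤) (g : ι → R) {q : ℕ} (hg : ∀ i, g i ^ q ∈ J) :
    ∃ c : ι → ℕ, (∀ i, c i < q) ∧ ∏ i, g i ^ c i ∉ J ∧ ∀ j, (∏ i, g i ^ c i) * g j ∈ J := by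
  classical
  have hone : (1 : R) ∉ J := (Ideal.ne_top_iff_one J).mp hJ
  set S := (Fintype.piFinset fun _ => range q).filter fun c => ∏ i, g i ^ c i ∉ J
  have hzero : 0 ∈ S := by
    simp only [S, mem_filter, Fintype.mem_piFinset, mem_range, Pi.zero_apply, pow_zero,
      prod_const_one]
    exact ⟨fun i => Nat.pos_of_ne_zero fun hq => hone (by simpa [hq] using hg i), hone⟩
  obtain ⟨c, hcS, hmax⟩ := S.exists_max_image (fun c => ∑ i, c i) ⟨0, hzero⟩
  simp only [S, mem_filter, Fintype.mem_piFinset, mem_range] at hcS hmax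
  refine ⟨c, hcS.1, hcS.2, fun j => ?_⟩
  rw [← prod_pow_add_single]
  by_cases hlt : ∀ i, (c + Pi.single j 1 : ι → ℕ) i < q
  · by_contra hnotMem
    have hsum := hmax _ ⟨hlt, hnotMem⟩
    simp [sum_add_distrib] at hsum
  · obtain ⟨i, hi⟩ := not_forall.mp hlt
    have hiq : (c + Pi.single j 1 : ι → ℕ) i = q := by
      have hci := hcS.1 i
      rcases eq_or_ne i j with rfl | hij
      · simp only [Pi.add_apply, Pi.single_eq_same] at hi ⊢; omega
      · simp only [Pi.add_apply, Pi.single_eq_of_ne hij] at hi; omega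
    exact Ideal.mem_of_dvd _ (hiq ▸ dvd_prod_of_mem (fun i => g i ^ _) (mem_univ i)) (hg i)

theorem Ideal.mem_colon_span_range_iff {ι R : Type*} [CommSemiring R] {J : Ideal R}
    {g : ι → R} {f : R} : f ∈ J.colon (Ideal.span (Set.range g)) ↔ ∀ j, f * g j ∈ J := by
  rw [Ideal.colon_span, Submodule.mem_colon, Set.forall_mem_range]
  rfl

theorem pow_mem_frobPow {I : Ideal (MvPolynomial (Fin n) K)} {a : MvPolynomial (Fin n) K}
    (ha : a ∈ I) (q : ℕ) : a ^ q ∈ frobPow I q :=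
  Ideal.subset_span ⟨a, ha, rfl⟩

theorem frobPow_le_self (I : Ideal (MvPolynomial (Fin n) K)) {q : ℕ} (hq : 0 < q) :
    frobPow I q ≤ I :=
  Ideal.span_le.mpr <| by
    rintro _ ⟨a, ha, rfl⟩
    exact I.pow_mem_of_mem ha q hq

theorem stmt5_general {K : Type*} [Field K] {n : ℕ}
    (q : ℕ) (hq1 : 1 < q)
    (I : Ideal (MvPolynomial (Fin n) K)) (htop : I ≠ ⊤)
    (m : ℕ) (g : Fin m → MvPolynomial (Fin n) K) (dg : Fin m → ℕ)
    (hg : ∀ i, (g i).IsHomogeneous (dg i))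
    (hspan : I = Ideal.span (Set.range g)) :
    (∃ (f : MvPolynomial (Fin n) K) (df : ℕ), f.IsHomogeneous df ∧
      f ∈ (frobPow I q).colon I ∧ f ∉ frobPow I q ∧ df ≤ (q - 1) * ∑ i, dg i) ∧
    alphaq I q ≤ (q - 1) * ∑ i, dg i := by
  have hgI : ∀ i, g i ∈ I := fun i => hspan ▸ Ideal.subset_span ⟨i, rfl⟩
  have hfrob : frobPow I q ≠ ⊤ := fun h => htop (top_le_iff.mp (h ▸ frobPow_le_self I (by omega)))
  obtain ⟨c, hcq, hnotMem, hmul⟩ :=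
    exists_prod_pow_notMem_forall_mul_mem hfrob g fun i => pow_mem_frobPow (hgI i) q
  have hcolon : ∏ i, g i ^ c i ∈ (frobPow I q).colon I := by
    rw [hspan, Ideal.mem_colon_span_range_iff, ← hspan]
    exact hmul
  have hhom : (∏ i, g i ^ c i).IsHomogeneous (∑ i, dg i * c i) :=
    IsHomogeneous.prod _ _ _ fun i _ => (hg i).pow (c i)
  have hdeg : ∑ i, dg i * c i ≤ (q - 1) * ∑ i, dg i := by
    rw [mul_sum]
    exact sum_le_sum fun i _ => by
      rw [mul_comm]
      exact Nat.mul_le_mul_right _ (Nat.le_sub_one_of_lt (hcq i))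
  refine ⟨⟨_, _, hhom, hcolon, hnotMem, hdeg⟩, le_trans ?_ hdeg⟩
  exact Nat.sInf_le ⟨_, hhom, hcolon, hnotMem⟩

theorem stmt5 {K : Type*} [Field K] {n : ℕ} (p : ℕ) (hp : p.Prime) [CharP K p]
    (q : ℕ) (hq : ∃ e : ℕ, q = p ^ e) (hq1 : 1 < q)
    (I : Ideal (MvPolynomial (Fin n) K)) (hgr : IsGraded I) (htop : I ≠ ⊤) (hbot : I ≠ ⊥)
    (m : ℕ) (g : Fin m → MvPolynomial (Fin n) K) (dg : Fin m → ℕ)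
    (hg : ∀ i, (g i).IsHomogeneous (dg i))
    (hspan : I = Ideal.span (Set.range g))
    (hmin : ∀ s : Set (MvPolynomial (Fin n) K), s ⊂ Set.range g → Ideal.span s ≠ I) :
    (∃ (f : MvPolynomial (Fin n) K) (df : ℕ), f.IsHomogeneous df ∧
      f ∈ (frobPow I q).colon I ∧ f ∉ frobPow I q ∧ df ≤ (q - 1) * ∑ i, dg i) ∧
    alphaq I q ≤ (q - 1) * ∑ i, dg i :=
  stmt5_general q hq1 I htop m g dg hg hspan

end
end

section
/- Let S = K[x_1,…,x_n] be a standard graded polynomial ring over a field K of prime characteristic p, let 𝔭 ⊂ S be a proper nonzero graded prime ideal, and let q = p^e > 1. Then v(𝔭^{[q]}) = α_q(𝔭). -/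
open MvPolynomial

attribute [local instance] MvPolynomial.gradedAlgebra

noncomputable section

variable {K : Type*} [Field K] {n : ℕ}

universe uF

noncomputable section FrobAux

/-- Type synonym for `F` viewed as a module over itself via iterated Frobenius. -/
def KFrob (F : Type uF) (p e : ℕ) : Type _ := F

instance {F : Type*} [Field F] {p e : ℕ} : AddCommGroup (KFrob F p e) :=
  inferInstanceAs (AddCommGroup F)

noncomputable instance {F : Type*} [Field F] {p e : ℕ} [Fact p.Prime] [CharP F p] :
    Module F (KFrob F p e) :=
  letI : Module F (KFrob F p e) := inferInstanceAs (Module F F)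
  haveI : ExpChar F p := .prime Fact.out
  Module.compHom (KFrob F p e) (iterateFrobenius F p e)

/-- A `q`-semilinear basis-decomposition package for `F`. -/
structure FrobBasisData (F : Type uF) [Field F] (q : ℕ) where
  ι : Type uF
  c : ι → F
  σ : ι → F →+ F
  σ_smul : ∀ j (s k : F), σ j (s ^ q * k) = s * σ j k
  supp : F → Finset ι
  sum_repr : ∀ (J : Finset ι) (k : F), supp k ⊆ J → ∑ j ∈ J, (σ j k) ^ q * c j = k

lemma exists_frobBasisData (F : Type uF) [Field F] (p e : ℕ) (hp : p.Prime) [CharP F p] :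
    Nonempty (FrobBasisData F (p ^ e)) := by
  haveI : Fact p.Prime := ⟨hp⟩
  classical
  set V := KFrob F p e with hV
  let B := Module.Basis.ofVectorSpace F V
  let ofK : F → V := fun x => x
  let toKhom : V →+ F := AddMonoidHom.mk' (fun x => (x : F)) (fun _ _ => rfl)
  have hsmul : ∀ (s : F) (v : V), toKhom (s • v) = s ^ p ^ e * toKhom v := fun s v => rfl
  have hofK : ∀ (a b : F), ofK (a + b) = ofK a + ofK b := fun _ _ => rfl
  refine ⟨⟨↥(Module.Basis.ofVectorSpaceIndex F V),
    fun j => toKhom j.1,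
    fun j => AddMonoidHom.mk' (fun k => B.repr (ofK k) j) (fun a b => by
      show B.repr (ofK (a + b)) j = B.repr (ofK a) j + B.repr (ofK b) j
      rw [hofK, map_add]; rfl),
    ?_, fun k => (B.repr (ofK k)).support, ?_⟩⟩
  · intro j s k
    have h1 : ofK (s ^ p ^ e * k) = s • (ofK k) := rfl
    show B.repr (ofK (s ^ p ^ e * k)) j = s * B.repr (ofK k) j
    rw [h1, B.repr.map_smul]
    rfl
  · intro J k hJ
    show ∑ j ∈ J, (B.repr (ofK k) j) ^ p ^ e * toKhom j.1 = k
    have hJ' : (B.repr (ofK k)).support ⊆ J := hJ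
    have h1 : ∑ j ∈ J, (B.repr (ofK k) j) • (B j) = ofK k := by
      rw [← Finset.sum_subset hJ' (fun j _ hj => by
        rw [Finsupp.notMem_support_iff.mp hj, zero_smul])]
      conv_rhs => rw [← B.linearCombination_repr (ofK k)]
      rw [Finsupp.linearCombination_apply, Finsupp.sum]
    calc ∑ j ∈ J, (B.repr (ofK k) j) ^ p ^ e * toKhom j.1
        = ∑ j ∈ J, toKhom ((B.repr (ofK k) j) • (B j)) := by
          refine Finset.sum_congr rfl fun j _ => ?_
          rw [hsmul, Module.Basis.ofVectorSpace_apply_self]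
      _ = toKhom (ofK k) := by rw [← map_sum, h1]
      _ = k := rfl

end FrobAux

open MvPolynomial

namespace FrobAux2

variable {F : Type uF} [Field F] {nn : ℕ}

/-- The semilinear component operator on polynomials:
`coeff u (TT q D a j b) = D.σ j (coeff (q • u + a) b)`. -/
noncomputable def TT (q : ℕ) (hq0 : 0 < q) (D : FrobBasisData F q) (a : Fin nn →₀ ℕ) (j : D.ι)
    (b : MvPolynomial (Fin nn) F) : MvPolynomial (Fin nn) F :=
  AddMonoidAlgebra.ofCoeff <| Finsupp.onFinset (b.support.image fun m => (m - a).mapRange (· / q) (Nat.zero_div q))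
    (fun u => D.σ j (MvPolynomial.coeff (q • u + a) b))
    (by
      intro u hu
      have hc : MvPolynomial.coeff (q • u + a) b ≠ 0 := by
        intro h0; exact hu (by show D.σ j (MvPolynomial.coeff (q • u + a) b) = 0; rw [h0, map_zero])
      refine Finset.mem_image.mpr ⟨q • u + a, MvPolynomial.mem_support_iff.mpr hc, ?_⟩
      ext i
      rw [Finsupp.mapRange_apply, Finsupp.tsub_apply, Finsupp.add_apply, Finsupp.smul_apply]
      simp only [smul_eq_mul, Nat.add_sub_cancel]
      exact Nat.mul_div_cancel_left _ hq0)

variable {q : ℕ} (hq0 : 0 < q) (D : FrobBasisData F q)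

lemma coeff_TT (a : Fin nn →₀ ℕ) (j : D.ι) (b : MvPolynomial (Fin nn) F) (u : Fin nn →₀ ℕ) :
    MvPolynomial.coeff u (TT q hq0 D a j b) = D.σ j (MvPolynomial.coeff (q • u + a) b) := rfl

lemma TT_add (a : Fin nn →₀ ℕ) (j : D.ι) (b b' : MvPolynomial (Fin nn) F) :
    TT q hq0 D a j (b + b') = TT q hq0 D a j b + TT q hq0 D a j b' := by
  apply MvPolynomial.ext
  intro u
  rw [coeff_add, coeff_TT, coeff_TT, coeff_TT, coeff_add, map_add]

/-- `TT` bundled as an additive monoid hom. -/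
noncomputable def TThom (a : Fin nn →₀ ℕ) (j : D.ι) :
    MvPolynomial (Fin nn) F →+ MvPolynomial (Fin nn) F :=
  AddMonoidHom.mk' (TT q hq0 D a j) (TT_add hq0 D a j)

end FrobAux2

namespace FrobAux2

variable {F : Type uF} [Field F] {nn : ℕ} {q : ℕ}

lemma le_aux {a m u : Fin nn →₀ ℕ} (hq0 : 0 < q) (ha : ∀ i, a i < q) :
    q • m ≤ q • u + a ↔ m ≤ u := by
  rw [Finsupp.le_def, Finsupp.le_def]
  constructor
  · intro h i
    have h1 := h i
    rw [Finsupp.add_apply, Finsupp.smul_apply, Finsupp.smul_apply, smul_eq_mul, smul_eq_mul] at h1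
    have h2 := ha i
    by_contra hc
    push_neg at hc
    nlinarith
  · intro h i
    rw [Finsupp.add_apply, Finsupp.smul_apply, Finsupp.smul_apply, smul_eq_mul, smul_eq_mul]
    have := h i
    nlinarith

lemma sub_aux {a m u : Fin nn →₀ ℕ} (hmu : m ≤ u) :
    (q • u + a) - q • m = q • (u - m) + a := by
  ext i
  have := (Finsupp.le_def.mp hmu) i
  rw [Finsupp.tsub_apply, Finsupp.add_apply, Finsupp.add_apply, Finsupp.smul_apply,
    Finsupp.smul_apply, Finsupp.smul_apply, Finsupp.tsub_apply]
  simp only [smul_eq_mul]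
  have h2 : q * (u i - m i) = q * u i - q * m i := Nat.mul_sub q (u i) (m i)
  have h3 : q * m i ≤ q * u i := Nat.mul_le_mul_left q this
  omega

variable (hq0 : 0 < q) (D : FrobBasisData F q)

lemma TT_monomial_pow_mul (a : Fin nn →₀ ℕ) (ha : ∀ i, a i < q) (j : D.ι)
    (m : Fin nn →₀ ℕ) (c : F) (b : MvPolynomial (Fin nn) F) :
    TT q hq0 D a j ((monomial m c) ^ q * b) = monomial m c * TT q hq0 D a j b := by
  rw [monomial_pow]
  apply MvPolynomial.ext
  intro u
  rw [coeff_TT, coeff_monomial_mul', coeff_monomial_mul', coeff_TT]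
  by_cases hmu : m ≤ u
  · rw [if_pos ((le_aux hq0 ha).mpr hmu), if_pos hmu, sub_aux hmu, D.σ_smul]
  · rw [if_neg (fun h => hmu ((le_aux hq0 ha).mp h)), if_neg hmu, map_zero]

end FrobAux2

namespace FrobAux2

variable {F : Type uF} [Field F] {nn : ℕ} {p e q : ℕ}

lemma TT_pow_mul [CharP F p] (hp : p.Prime) (hqe : q = p ^ e)
    (hq0 : 0 < q) (D : FrobBasisData F q) (a : Fin nn →₀ ℕ) (ha : ∀ i, a i < q) (j : D.ι)
    (s b : MvPolynomial (Fin nn) F) :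
    TT q hq0 D a j (s ^ q * b) = s * TT q hq0 D a j b := by
  haveI : Fact p.Prime := ⟨hp⟩
  haveI : ExpChar (MvPolynomial (Fin nn) F) p := .prime hp
  induction s using MvPolynomial.induction_on' with
  | monomial m c => exact TT_monomial_pow_mul hq0 D a ha j m c b
  | add s t hs ht =>
      have hfr : (s + t) ^ q = s ^ q + t ^ q := by
        subst hqe; exact add_pow_char_pow s t p e
      rw [hfr, add_mul, TT_add, hs, ht, add_mul]

lemma TT_mem [CharP F p] (hp : p.Prime) (hqe : q = p ^ e)
    (hq0 : 0 < q) (D : FrobBasisData F q) (a : Fin nn →₀ ℕ) (ha : ∀ i, a i < q) (j : D.ι)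
    {𝔭 : Ideal (MvPolynomial (Fin nn) F)} {b : MvPolynomial (Fin nn) F}
    (hb : b ∈ frobPow 𝔭 q) : TT q hq0 D a j b ∈ 𝔭 := by
  rw [frobPow, Ideal.span] at hb
  rw [Submodule.mem_span_set] at hb
  obtain ⟨co, hsupp, hsum⟩ := hb
  rw [← hsum]
  show (TThom hq0 D a j) (co.sum fun mi r => r • mi) ∈ 𝔭
  rw [map_finsuppSum (TThom hq0 D a j)]
  rw [Finsupp.sum]
  apply Ideal.sum_mem
  intro z hz
  obtain ⟨h, hh, hz'⟩ := hsupp hz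
  have hz2 : z = h ^ q := hz'.symm
  have key : TT q hq0 D a j (h ^ q * co (h ^ q)) ∈ 𝔭 := by
    rw [TT_pow_mul hp hqe hq0 D a ha j]
    exact Ideal.mul_mem_right _ _ hh
  show TT q hq0 D a j (co z • z) ∈ 𝔭
  rw [hz2, smul_eq_mul, mul_comm]
  exact key

end FrobAux2

namespace FrobAux2

variable {F : Type uF} [Field F] {nn : ℕ} {p e q : ℕ}

lemma coeff_pow_q [CharP F p] (hp : p.Prime) (hqe : q = p ^ e) (hq0 : 0 < q)
    (f : MvPolynomial (Fin nn) F) (w : Fin nn →₀ ℕ) :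
    MvPolynomial.coeff w (f ^ q) =
      if w.mapRange (· % q) (Nat.zero_mod q) = 0 then
        (MvPolynomial.coeff (w.mapRange (· / q) (Nat.zero_div q)) f) ^ q
      else 0 := by
  haveI : Fact p.Prime := ⟨hp⟩
  haveI : ExpChar (MvPolynomial (Fin nn) F) p := .prime hp
  classical
  conv_lhs => rw [f.as_sum]
  have hsum : (∑ v ∈ f.support, (monomial v) (MvPolynomial.coeff v f)) ^ q
      = ∑ v ∈ f.support, ((monomial v) (MvPolynomial.coeff v f)) ^ q := by
    subst hqe; exact sum_pow_char_pow p e f.support _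
  rw [hsum]
  simp_rw [monomial_pow]
  rw [MvPolynomial.coeff_sum]
  by_cases hw : w.mapRange (· % q) (Nat.zero_mod q) = 0
  · rw [if_pos hw]
    have hmod : ∀ i, w i % q = 0 := by
      intro i
      have h1 : w.mapRange (· % q) (Nat.zero_mod q) i = 0 := by rw [hw]; rfl
      rwa [Finsupp.mapRange_apply] at h1
    have key : ∀ v : Fin nn →₀ ℕ, (q • v = w) ↔ v = w.mapRange (· / q) (Nat.zero_div q) := by
      intro v
      constructor
      · intro h
        ext i
        have : q * v i = w i := by
          rw [← h]; simp [Finsupp.smul_apply, smul_eq_mul]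
        rw [Finsupp.mapRange_apply, ← this, Nat.mul_div_cancel_left _ hq0]
      · intro h
        subst h
        ext i
        rw [Finsupp.smul_apply, Finsupp.mapRange_apply, smul_eq_mul]
        exact Nat.mul_div_cancel' (Nat.dvd_of_mod_eq_zero (hmod i))
    calc ∑ v ∈ f.support, MvPolynomial.coeff w ((monomial (q • v)) (MvPolynomial.coeff v f ^ q))
        = ∑ v ∈ f.support,
            if v = w.mapRange (· / q) (Nat.zero_div q) then (MvPolynomial.coeff v f) ^ q else 0 := by
          refine Finset.sum_congr rfl fun v _ => ?_
          rw [MvPolynomial.coeff_monomial]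
          exact if_congr (key v) rfl rfl
      _ = if w.mapRange (· / q) (Nat.zero_div q) ∈ f.support
            then (MvPolynomial.coeff (w.mapRange (· / q) (Nat.zero_div q)) f) ^ q else 0 :=
          Finset.sum_ite_eq' f.support _ _
      _ = (MvPolynomial.coeff (w.mapRange (· / q) (Nat.zero_div q)) f) ^ q := by
          split_ifs with hmem
          · rfl
          · rw [MvPolynomial.notMem_support_iff.mp hmem, zero_pow hq0.ne']
  · rw [if_neg hw]
    apply Finset.sum_eq_zero
    intro v _
    rw [MvPolynomial.coeff_monomial, if_neg]
    intro h
    apply hw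
    ext i
    rw [Finsupp.mapRange_apply, Finsupp.zero_apply, ← h, Finsupp.smul_apply, smul_eq_mul,
      Nat.mul_mod_right]

end FrobAux2

namespace FrobAux2

variable {F : Type uF} [Field F] {nn : ℕ} {p e q : ℕ}

lemma TT_recon [CharP F p] (hp : p.Prime) (hqe : q = p ^ e) (hq0 : 0 < q)
    (D : FrobBasisData F q) {𝔭 : Ideal (MvPolynomial (Fin nn) F)} {b : MvPolynomial (Fin nn) F}
    (hb : ∀ (a : Fin nn →₀ ℕ) (j : D.ι), (∀ i, a i < q) → TT q hq0 D a j b ∈ 𝔭) :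
    b ∈ frobPow 𝔭 q := by
  classical
  set A := b.support.image (fun m => m.mapRange (· % q) (Nat.zero_mod q)) with hA
  set J := b.support.biUnion (fun m => D.supp (MvPolynomial.coeff m b)) with hJdef
  have hsmall : ∀ a ∈ A, ∀ i, a i < q := by
    intro a haA i
    obtain ⟨m, _, rfl⟩ := Finset.mem_image.mp haA
    rw [Finsupp.mapRange_apply]
    exact Nat.mod_lt _ hq0
  have hidentity : b = ∑ a ∈ A, ∑ j ∈ J, (TT q hq0 D a j b) ^ q * (monomial a) (D.c j) := by
    apply MvPolynomial.ext
    intro m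
    have hterm : ∀ a ∈ A, ∀ j : D.ι,
        MvPolynomial.coeff m ((TT q hq0 D a j b) ^ q * (monomial a) (D.c j)) =
          if a = m.mapRange (· % q) (Nat.zero_mod q) then
            (D.σ j (MvPolynomial.coeff m b)) ^ q * D.c j else 0 := by
      intro a haA j
      have haq := hsmall a haA
      rw [coeff_mul_monomial']
      by_cases hcase : a = m.mapRange (· % q) (Nat.zero_mod q)
      · subst hcase
        have hle : m.mapRange (· % q) (Nat.zero_mod q) ≤ m := by
          rw [Finsupp.le_def]; intro i; rw [Finsupp.mapRange_apply]; exact Nat.mod_le _ _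
        rw [if_pos hle, if_pos rfl, coeff_pow_q hp hqe hq0]
        have hsub : ∀ i, (m - m.mapRange (· % q) (Nat.zero_mod q)) i = q * (m i / q) := by
          intro i
          rw [Finsupp.tsub_apply, Finsupp.mapRange_apply]
          have := Nat.mod_add_div (m i) q
          omega
        have hmd : (m - m.mapRange (· % q) (Nat.zero_mod q)).mapRange (· % q) (Nat.zero_mod q)
            = 0 := by
          ext i
          rw [Finsupp.mapRange_apply, hsub i, Finsupp.zero_apply, Nat.mul_mod_right]
        rw [if_pos hmd]
        have hdv : (m - m.mapRange (· % q) (Nat.zero_mod q)).mapRange (· / q) (Nat.zero_div q)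
            = m.mapRange (· / q) (Nat.zero_div q) := by
          ext i
          rw [Finsupp.mapRange_apply, Finsupp.mapRange_apply, hsub i,
            Nat.mul_div_cancel_left _ hq0]
        rw [hdv, coeff_TT]
        have hrec : q • m.mapRange (· / q) (Nat.zero_div q)
            + m.mapRange (· % q) (Nat.zero_mod q) = m := by
          ext i
          rw [Finsupp.add_apply, Finsupp.smul_apply, Finsupp.mapRange_apply,
            Finsupp.mapRange_apply, smul_eq_mul]
          exact Nat.div_add_mod (m i) q
        rw [hrec]
      · rw [if_neg hcase]
        by_cases hle : a ≤ m
        · rw [if_pos hle, coeff_pow_q hp hqe hq0, if_neg, zero_mul]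
          intro h0
          apply hcase
          ext i
          have h1 : (m i - a i) % q = 0 := by
            have h2 : (m - a).mapRange (· % q) (Nat.zero_mod q) i = 0 := by
              rw [h0]; rfl
            rwa [Finsupp.mapRange_apply, Finsupp.tsub_apply] at h2
          have h2 : a i ≤ m i := Finsupp.le_def.mp hle i
          obtain ⟨k, hk⟩ := Nat.dvd_of_mod_eq_zero h1
          have h3 : m i = a i + q * k := by omega
          rw [Finsupp.mapRange_apply, h3, Nat.add_mul_mod_self_left,
            Nat.mod_eq_of_lt (haq i)]
        · rw [if_neg hle]
    have hR : MvPolynomial.coeff m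
        (∑ a ∈ A, ∑ j ∈ J, (TT q hq0 D a j b) ^ q * (monomial a) (D.c j)) =
          if m.mapRange (· % q) (Nat.zero_mod q) ∈ A then
            ∑ j ∈ J, (D.σ j (MvPolynomial.coeff m b)) ^ q * D.c j else 0 := by
      simp only [MvPolynomial.coeff_sum]
      calc ∑ a ∈ A, ∑ j ∈ J,
            MvPolynomial.coeff m ((TT q hq0 D a j b) ^ q * (monomial a) (D.c j))
          = ∑ a ∈ A, (if a = m.mapRange (· % q) (Nat.zero_mod q) then
              ∑ j ∈ J, (D.σ j (MvPolynomial.coeff m b)) ^ q * D.c j else 0) := by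
            refine Finset.sum_congr rfl fun a ha => ?_
            rw [Finset.sum_congr rfl (fun j _ => hterm a ha j)]
            split_ifs with h
            · rfl
            · exact Finset.sum_const_zero
        _ = _ := Finset.sum_ite_eq' A _ _
    rw [hR]
    by_cases hm : m ∈ b.support
    · rw [if_pos (Finset.mem_image_of_mem _ hm)]
      exact (D.sum_repr J _ (hJdef ▸ Finset.subset_biUnion_of_mem
        (fun m => D.supp (MvPolynomial.coeff m b)) hm)).symm
    · have h0 : MvPolynomial.coeff m b = 0 := MvPolynomial.notMem_support_iff.mp hm
      rw [h0]
      split_ifs with h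
      · symm
        apply Finset.sum_eq_zero
        intro j _
        rw [map_zero, zero_pow hq0.ne', zero_mul]
      · rfl
  rw [hidentity]
  apply Ideal.sum_mem
  intro a haA
  apply Ideal.sum_mem
  intro j _
  exact Ideal.mul_mem_right _ _
    (Ideal.subset_span ⟨TT q hq0 D a j b, hb a j (hsmall a haA), rfl⟩)

end FrobAux2

namespace FrobAux2

variable {F : Type uF} [Field F] {nn : ℕ} {p e q : ℕ}

lemma frobPow_quot [CharP F p] (hp : p.Prime) (hqe : q = p ^ e) (hq1 : 1 < q)
    {𝔭 : Ideal (MvPolynomial (Fin nn) F)} (hpr : 𝔭.IsPrime)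
    {g b : MvPolynomial (Fin nn) F} (hgb : g * b ∈ frobPow 𝔭 q) (hg : g ∉ 𝔭) :
    b ∈ frobPow 𝔭 q := by
  have hq0 : 0 < q := Nat.zero_lt_one.trans hq1
  obtain ⟨D⟩ := exists_frobBasisData F p e hp
  have hD : FrobBasisData F q := hqe ▸ D
  clear D
  have hgq : g ^ q * b ∈ frobPow 𝔭 q := by
    have h1 : g ^ q * b = g ^ (q - 1) * (g * b) := by
      rw [← mul_assoc, ← pow_succ]
      congr 2
      omega
    rw [h1]
    exact Ideal.mul_mem_left _ _ hgb
  apply TT_recon hp hqe hq0 hD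
  intro a j ha
  have h1 : TT q hq0 hD a j (g ^ q * b) ∈ 𝔭 := TT_mem hp hqe hq0 hD a ha j hgq
  rw [TT_pow_mul hp hqe hq0 hD a ha j] at h1
  exact (hpr.mem_or_mem h1).resolve_left hg

end FrobAux2

theorem stmt6 {K : Type*} [Field K] {n : ℕ} (p : ℕ) (hp : p.Prime) [CharP K p]
    (q : ℕ) (hq : ∃ e : ℕ, q = p ^ e) (hq1 : 1 < q)
    (𝔭 : Ideal (MvPolynomial (Fin n) K)) (hgr : IsGraded 𝔭) (hpr : 𝔭.IsPrime) (hbot : 𝔭 ≠ ⊥) :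
    vnum (frobPow 𝔭 q) = alphaq 𝔭 q := by
  classical
  obtain ⟨e, hqe⟩ := hq
  have hq0 : 0 < q := Nat.zero_lt_one.trans hq1
  set I := frobPow 𝔭 q with hI
  have hle : I ≤ 𝔭 := by
    rw [hI, frobPow]
    apply Ideal.span_le.mpr
    rintro z ⟨h, hh, rfl⟩
    exact Ideal.pow_mem_of_mem 𝔭 hh q hq0
  have hne : I ≠ ⊤ := fun h => hpr.ne_top (top_le_iff.mp (h ▸ hle))
  have hquot : ∀ g b : MvPolynomial (Fin n) K, g * b ∈ I → g ∉ 𝔭 → b ∈ I :=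
    fun g b hgb hg => FrobAux2.frobPow_quot hp hqe hq1 hpr hgb hg
  have hrad : I.radical = 𝔭 := by
    apply le_antisymm
    · have h1 := Ideal.radical_mono hle
      rwa [hpr.radical] at h1
    · intro h hh
      exact ⟨q, Ideal.subset_span ⟨h, hh, rfl⟩⟩
  have hprimary : I.IsPrimary := by
    apply Ideal.isPrimary_iff.mpr
    refine ⟨hne, ?_⟩
    intro x y hxy
    by_cases hy : y ∈ 𝔭
    · right; rw [hrad]; exact hy
    · left; exact hquot y x (mul_comm x y ▸ hxy) hy
  have hAss : Ass I = {𝔭} := by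
    show associatedPrimes (MvPolynomial (Fin n) K) (MvPolynomial (Fin n) K ⧸ I) = {𝔭}
    rw [associatedPrimes.eq_singleton_of_isPrimary hprimary, hrad]
  have hAssMem : 𝔭 ∈ Ass I := by rw [hAss]; exact Set.mem_singleton _
  rw [vnum, alphaq]
  rw [← hI]
  congr 1
  ext d
  simp only [Set.mem_setOf_eq]
  constructor
  · rintro ⟨f, hf, 𝔮, h𝔮, hcol⟩
    have h𝔮p : 𝔮 = 𝔭 := by rw [hAss] at h𝔮; exact h𝔮
    subst h𝔮p
    refine ⟨f, hf, ?_, ?_⟩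
    · apply Submodule.mem_colon.mpr
      intro y hy
      rw [smul_eq_mul, mul_comm, ← smul_eq_mul]
      exact Submodule.mem_colon_span_singleton.mp (hcol ▸ hy)
    · intro hfI
      apply hpr.ne_top
      rw [← hcol, Ideal.eq_top_iff_one]
      exact Submodule.mem_colon_span_singleton.mpr (by rw [one_smul]; exact hfI)
  · rintro ⟨f, hf, hfc, hfI⟩
    refine ⟨f, hf, 𝔭, hAssMem, ?_⟩
    apply le_antisymm
    · intro x hx
      have hxf : x * f ∈ I := by
        have h1 := Submodule.mem_colon_span_singleton.mp hx
        rwa [smul_eq_mul] at h1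
      by_contra hxp
      exact hfI (hquot x f hxf hxp)
    · intro y hy
      apply Submodule.mem_colon_span_singleton.mpr
      rw [smul_eq_mul, mul_comm, ← smul_eq_mul]
      exact Submodule.mem_colon.mp hfc y hy


end
end

section
/- Let S = K[x_1,…,x_n] be a standard graded polynomial ring over a field K of prime characteristic p, and let I ⊂ S be a proper nonzero graded ideal. Then v(I^{[q]}) ≥ q·v(I) for all q = p^e ≥ 1, and consequently the sequence e ↦ v(I^{[p^e]})/p^e is non-decreasing in e. -/
open MvPolynomial

attribute [local instance] MvPolynomial.gradedAlgebra

noncomputable section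

variable {K : Type*} [Field K] {n : ℕ}

set_option maxHeartbeats 1000000
set_option synthInstance.maxHeartbeats 200000

noncomputable section Machinery

variable {q : ℕ}

local notation "S" => MvPolynomial (Fin n) K

namespace FrobAux

/-- componentwise division of exponents by `q` -/
def qdiv (q : ℕ) (a : Fin n →₀ ℕ) : Fin n →₀ ℕ := a.mapRange (· / q) (Nat.zero_div q)

/-- componentwise remainder of exponents mod `q` -/
def qmod (q : ℕ) (a : Fin n →₀ ℕ) : Fin n →₀ ℕ := a.mapRange (· % q) (Nat.zero_mod q)

@[simp] lemma qdiv_apply (a : Fin n →₀ ℕ) (i : Fin n) : qdiv q a i = a i / q :=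
  Finsupp.mapRange_apply

@[simp] lemma qmod_apply (a : Fin n →₀ ℕ) (i : Fin n) : qmod q a i = a i % q :=
  Finsupp.mapRange_apply

lemma qdiv_add_qmod (a : Fin n →₀ ℕ) : q • qdiv q a + qmod q a = a := by
  ext i
  simp [Nat.div_add_mod]

lemma qmod_lt (hq : 0 < q) (a : Fin n →₀ ℕ) (i : Fin n) : qmod q a i < q := by
  simp [Nat.mod_lt _ hq]

lemma qmod_mul_add {b : Fin n →₀ ℕ} (hb : ∀ i, b i < q) (c : Fin n →₀ ℕ) :
    qmod q (q • c + b) = b := by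
  ext i
  simp only [qmod_apply, Finsupp.add_apply, Finsupp.smul_apply, smul_eq_mul]
  rw [Nat.mul_add_mod, Nat.mod_eq_of_lt (hb i)]

lemma qdiv_mul_add (hq : 0 < q) {b : Fin n →₀ ℕ} (hb : ∀ i, b i < q) (c : Fin n →₀ ℕ) :
    qdiv q (q • c + b) = c := by
  ext i
  simp only [qdiv_apply, Finsupp.add_apply, Finsupp.smul_apply, smul_eq_mul]
  rw [Nat.mul_add_div hq, Nat.div_eq_of_lt (hb i), add_zero]

lemma mul_add_eq_iff (hq : 0 < q) {b : Fin n →₀ ℕ} (hb : ∀ i, b i < q)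
    {a c : Fin n →₀ ℕ} : q • c + b = a ↔ qmod q a = b ∧ qdiv q a = c := by
  constructor
  · rintro rfl
    exact ⟨qmod_mul_add hb c, qdiv_mul_add hq hb c⟩
  · rintro ⟨rfl, rfl⟩
    exact qdiv_add_qmod a

lemma smul_cancel (hq : 0 < q) {a c : Fin n →₀ ℕ} (h : q • a = q • c) : a = c := by
  ext j
  have := DFunLike.congr_fun h j
  simp only [Finsupp.smul_apply, smul_eq_mul] at this
  exact Nat.eq_of_mul_eq_mul_left hq this

section Tau

variable (σ : K →+* K)

lemma rangeRestrictField_surj : Function.Surjective σ.rangeRestrictField := by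
  rintro ⟨y, hy⟩
  obtain ⟨x, rfl⟩ := RingHom.mem_fieldRange.mp hy
  exact ⟨x, rfl⟩

/-- `σ` as a ring equivalence onto its field range. -/
def sEquiv : K ≃+* ↥σ.fieldRange :=
  RingEquiv.ofBijective σ.rangeRestrictField ⟨σ.rangeRestrictField.injective,
    rangeRestrictField_surj σ⟩

/-- The inverse of `σ`, defined on its field range. -/
def sInv : ↥σ.fieldRange →+* K := ((sEquiv σ).symm : ↥σ.fieldRange ≃+* K)

lemma coe_sEquiv (x : K) : (sEquiv σ x : K) = σ x := by
  rfl

lemma sigma_sInv (l : ↥σ.fieldRange) : σ (sInv σ l) = ↑l := by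
  have h : (sEquiv σ) ((sEquiv σ).symm l) = l := (sEquiv σ).apply_symm_apply l
  have h2 : (↑((sEquiv σ) ((sEquiv σ).symm l)) : K) = σ ((sEquiv σ).symm l) :=
    coe_sEquiv σ _
  rw [h] at h2
  exact h2.symm

lemma sInv_sigma (x : K) (h : σ x ∈ σ.fieldRange) : sInv σ ⟨σ x, h⟩ = x := by
  have : sEquiv σ x = ⟨σ x, h⟩ := by
    ext; simp [coe_sEquiv]
  rw [sInv]
  simp [← this]

@[simp] lemma sInv_zero : sInv σ 0 = 0 := map_zero _

/-- index type for a basis of `K` over the range of `σ` -/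
def bIdx : Type _ := Module.Basis.ofVectorSpaceIndex ↥σ.fieldRange K

/-- a basis of `K` over the range of `σ` -/
def bas : Module.Basis (bIdx σ) ↥σ.fieldRange K := Module.Basis.ofVectorSpace _ _

variable (q) in
/-- The component maps for the decomposition of the polynomial ring along the
`q`-th power map. -/
def tau (i : bIdx σ) (b : Fin n →₀ ℕ) (s : S) : S :=
  ∑ a ∈ s.support,
    if qmod q a = b then monomial (qdiv q a) (sInv σ ((bas σ).repr (coeff a s) i)) else 0

lemma coeff_tau (hq : 0 < q) (i : bIdx σ) {b : Fin n →₀ ℕ} (hb : ∀ j, b j < q)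
    (s : S) (c : Fin n →₀ ℕ) :
    coeff c (tau q σ i b s) = sInv σ ((bas σ).repr (coeff (q • c + b) s) i) := by
  rw [tau, MvPolynomial.coeff_sum]
  have h1 : ∀ a ∈ s.support,
      (coeff c (if qmod q a = b then
        monomial (qdiv q a) (sInv σ ((bas σ).repr (coeff a s) i)) else 0))
      = if q • c + b = a then sInv σ ((bas σ).repr (coeff a s) i) else 0 := by
    intro a _
    by_cases hqa : q • c + b = a
    · obtain ⟨h1', h2'⟩ := (mul_add_eq_iff hq hb).mp hqa
      rw [if_pos hqa, if_pos h1', coeff_monomial, if_pos h2']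
    · rw [if_neg hqa]
      by_cases h1' : qmod q a = b
      · rw [if_pos h1', coeff_monomial, if_neg]
        intro h2'
        exact hqa ((mul_add_eq_iff hq hb).mpr ⟨h1', h2'⟩)
      · rw [if_neg h1', coeff_zero]
  rw [Finset.sum_congr rfl h1, Finset.sum_ite_eq]
  split_ifs with h
  · rfl
  · rw [MvPolynomial.notMem_support_iff.mp h]
    simp

lemma tau_add (hq : 0 < q) (i : bIdx σ) {b : Fin n →₀ ℕ} (hb : ∀ j, b j < q) (s t : S) :
    tau q σ i b (s + t) = tau q σ i b s + tau q σ i b t := by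
  apply MvPolynomial.ext
  intro c
  rw [MvPolynomial.coeff_add, coeff_tau σ hq i hb, coeff_tau σ hq i hb, coeff_tau σ hq i hb,
    MvPolynomial.coeff_add, map_add, Finsupp.add_apply, map_add]

lemma tau_zero (hq : 0 < q) (i : bIdx σ) {b : Fin n →₀ ℕ} (hb : ∀ j, b j < q) :
    tau q σ i b (0 : S) = 0 := by
  apply MvPolynomial.ext
  intro c
  simp [coeff_tau σ hq i hb]

lemma tau_sum (hq : 0 < q) (i : bIdx σ) {b : Fin n →₀ ℕ} (hb : ∀ j, b j < q)
    {α : Type*} (t : Finset α) (g : α → S) :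
    tau q σ i b (∑ x ∈ t, g x) = ∑ x ∈ t, tau q σ i b (g x) := by
  classical
  induction t using Finset.induction_on with
  | empty => simpa using tau_zero σ hq i hb
  | insert _ _ hx ih =>
    rw [Finset.sum_insert hx, Finset.sum_insert hx, tau_add σ hq i hb, ih]

variable (hσ : ∀ x, σ x = x ^ q) (ψ : MvPolynomial (Fin n) K →+* MvPolynomial (Fin n) K)
  (hψ : ∀ s, ψ s = s ^ q)

section psi

lemma le_of_add_eq (hq : 0 < q) {b : Fin n →₀ ℕ} (hb : ∀ j, b j < q)
    {a c c' : Fin n →₀ ℕ} (he : a + q • c = q • c' + b) : c ≤ c' := by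
  rw [Finsupp.le_def]
  intro j
  have h1 : a j + q * c j = q * c' j + b j := by
    have := DFunLike.congr_fun he j
    simpa using this
  have := hb j
  by_contra hlt
  push_neg at hlt
  nlinarith

lemma sub_exp_eq (hq : 0 < q) {b : Fin n →₀ ℕ} (hb : ∀ j, b j < q)
    {a c c' : Fin n →₀ ℕ} (hc : c ≤ c') : a + q • c = q • c' + b ↔ a = q • (c' - c) + b := by
  constructor
  · intro he
    ext j
    have h1 : a j + q * c j = q * c' j + b j := by
      have := DFunLike.congr_fun he j
      simpa using this
    have h2 : c j ≤ c' j := Finsupp.le_def.mp hc j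
    simp only [Finsupp.add_apply, Finsupp.smul_apply, smul_eq_mul, Finsupp.tsub_apply]
    have h3 : q * (c' j - c j) = q * c' j - q * c j := Nat.mul_sub ..
    have h4 : q * c j ≤ q * c' j := Nat.mul_le_mul_left q h2
    omega
  · intro he
    ext j
    have h2 : c j ≤ c' j := Finsupp.le_def.mp hc j
    have h1 : a j = q * (c' j - c j) + b j := by
      have := DFunLike.congr_fun he j
      simpa using this
    have h3 : q * (c' j - c j) = q * c' j - q * c j := Nat.mul_sub ..
    have h4 : q * c j ≤ q * c' j := Nat.mul_le_mul_left q h2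
    simp only [Finsupp.add_apply, Finsupp.smul_apply, smul_eq_mul]
    omega

include hψ hσ

lemma psi_monomial (c : Fin n →₀ ℕ) (m : K) :
    ψ (monomial c m) = monomial (q • c) (σ m) := by
  rw [hψ, MvPolynomial.monomial_pow, hσ]

omit hψ in
lemma sInv_mul_sigma (i : bIdx σ) (k m : K) :
    sInv σ ((bas σ).repr (k * σ m) i) = sInv σ ((bas σ).repr k i) * m := by
  have hmem : σ m ∈ σ.fieldRange := RingHom.mem_fieldRange_self σ m
  have h1 : k * σ m = (⟨σ m, hmem⟩ : ↥σ.fieldRange) • k := by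
    rw [Subring.smul_def]
    simp [mul_comm]
  rw [h1, map_smul, Finsupp.smul_apply, smul_eq_mul, map_mul, sInv_sigma, mul_comm]

lemma tau_mul_psi_monomial (hq : 0 < q) (i : bIdx σ) {b : Fin n →₀ ℕ} (hb : ∀ j, b j < q)
    (a : Fin n →₀ ℕ) (k : K) (c : Fin n →₀ ℕ) (m : K) :
    tau q σ i b (monomial a k * ψ (monomial c m)) = tau q σ i b (monomial a k) * monomial c m := by
  rw [psi_monomial σ hσ ψ hψ, MvPolynomial.monomial_mul]
  apply MvPolynomial.ext
  intro c'
  rw [coeff_tau σ hq i hb, MvPolynomial.coeff_mul_monomial', coeff_monomial]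
  by_cases hc : c ≤ c'
  · rw [if_pos hc, coeff_tau σ hq i hb, coeff_monomial]
    by_cases he : a + q • c = q • c' + b
    · rw [if_pos he, if_pos ((sub_exp_eq hq hb hc).mp he), sInv_mul_sigma σ hσ]
    · rw [if_neg he, if_neg (fun hx => he ((sub_exp_eq hq hb hc).mpr hx))]
      simp
  · have hne : a + q • c ≠ q • c' + b := fun he => hc (le_of_add_eq hq hb he)
    rw [if_neg hc, if_neg hne]
    simp

lemma tau_mul_psi (hq : 0 < q) (i : bIdx σ) {b : Fin n →₀ ℕ} (hb : ∀ j, b j < q)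
    (s j : MvPolynomial (Fin n) K) :
    tau q σ i b (s * ψ j) = tau q σ i b s * j := by
  induction j using MvPolynomial.induction_on' with
  | monomial c m =>
    induction s using MvPolynomial.induction_on' with
    | monomial a k => exact tau_mul_psi_monomial σ hσ ψ hψ hq i hb a k c m
    | add f g hf hg =>
      rw [add_mul, tau_add σ hq i hb, hf, hg, tau_add σ hq i hb, add_mul]
  | add f g hf hg =>
    rw [map_add ψ, mul_add, tau_add σ hq i hb, hf, hg, ← mul_add]

lemma coeff_psi_smul (hq : 0 < q) (t : MvPolynomial (Fin n) K) (c : Fin n →₀ ℕ) :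
    coeff (q • c) (ψ t) = σ (coeff c t) := by
  induction t using MvPolynomial.induction_on' with
  | monomial a k =>
    rw [psi_monomial σ hσ ψ hψ, coeff_monomial, coeff_monomial]
    by_cases h : a = c
    · rw [if_pos h, if_pos (by rw [h])]
    · rw [if_neg (fun hx => h (smul_cancel hq hx)), if_neg h, map_zero]
  | add f g hf hg => rw [map_add, MvPolynomial.coeff_add, MvPolynomial.coeff_add, hf, hg, map_add]

lemma coeff_psi_ne (hq : 0 < q) (t : MvPolynomial (Fin n) K) (c : Fin n →₀ ℕ)
    (hc : qmod q c ≠ 0) : coeff c (ψ t) = 0 := by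
  induction t using MvPolynomial.induction_on' with
  | monomial a k =>
    rw [psi_monomial σ hσ ψ hψ, coeff_monomial, if_neg]
    intro h
    apply hc
    have : q • a + (0 : Fin n →₀ ℕ) = c := by rw [add_zero, h]
    rw [← this, qmod_mul_add (fun j => by simpa using hq)]
  | add f g hf hg => rw [map_add, MvPolynomial.coeff_add, hf, hg, add_zero]

variable (q) in
/-- the finitely many residues appearing in `s` -/
def Bf (s : MvPolynomial (Fin n) K) : Finset (Fin n →₀ ℕ) := s.support.image (qmod q)

noncomputable local instance (σ : K →+* K) : DecidableEq (bIdx σ) := Classical.decEq _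

/-- the finitely many basis indices appearing in `s` -/
def If (s : MvPolynomial (Fin n) K) : Finset (bIdx σ) :=
  s.support.biUnion (fun a => ((bas σ).repr (coeff a s)).support)

omit hσ hψ in
lemma Bf_lt (hq : 0 < q) {s : MvPolynomial (Fin n) K} {b : Fin n →₀ ℕ} (hbs : b ∈ Bf q s) :
    ∀ j, b j < q := by
  obtain ⟨a, -, rfl⟩ := Finset.mem_image.mp hbs
  exact fun j => qmod_lt hq a j

omit hσ hψ in
lemma repr_zero_of_not_mem_If {s : MvPolynomial (Fin n) K} {i : bIdx σ} (h : i ∉ If σ s)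
    (a : Fin n →₀ ℕ) : (bas σ).repr (coeff a s) i = 0 := by
  by_cases ha : a ∈ s.support
  · by_contra hne
    exact h (Finset.mem_biUnion.mpr ⟨a, ha, Finsupp.mem_support_iff.mpr hne⟩)
  · rw [MvPolynomial.notMem_support_iff.mp ha]
    simp

omit hσ hψ in
lemma basis_sum (x : K) (t : Finset (bIdx σ)) (ht : ((bas σ).repr x).support ⊆ t) :
    (∑ i ∈ t, (((bas σ).repr x i : K) * (bas σ i : K))) = x := by
  classical
  have h := (bas σ).linearCombination_repr x
  rw [Finsupp.linearCombination_apply, Finsupp.sum] at h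
  calc ∑ i ∈ t, (((bas σ).repr x i : K) * (bas σ i : K))
      = ∑ i ∈ ((bas σ).repr x).support, (((bas σ).repr x i : K) * (bas σ i : K)) := by
        refine (Finset.sum_subset ht ?_).symm
        intro i _ hi
        rw [Finsupp.notMem_support_iff.mp hi]
        simp
    _ = ∑ i ∈ ((bas σ).repr x).support, ((bas σ).repr x i) • (bas σ i : K) :=
        Finset.sum_congr rfl fun i _ => rfl
    _ = x := h

/-- the key reconstruction step: coefficient of one summand -/
lemma coeff_term (hq : 0 < q) (i : bIdx σ) {b : Fin n →₀ ℕ} (hb : ∀ j, b j < q)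
    (s : MvPolynomial (Fin n) K) (a₀ : Fin n →₀ ℕ) :
    coeff a₀ (monomial b ((bas σ i : K)) * ψ (tau q σ i b s)) =
      if b = qmod q a₀ then (((bas σ).repr (coeff a₀ s) i : K) * (bas σ i : K)) else 0 := by
  rw [MvPolynomial.coeff_monomial_mul']
  by_cases hba : b ≤ a₀
  · rw [if_pos hba]
    by_cases hbm : b = qmod q a₀
    · subst hbm
      have hsub : a₀ - qmod q a₀ = q • qdiv q a₀ := by
        ext j
        simp only [Finsupp.tsub_apply, qmod_apply, qdiv_apply, Finsupp.smul_apply, smul_eq_mul]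
        have := Nat.div_add_mod (a₀ j) q
        omega
      rw [if_pos rfl, hsub, coeff_psi_smul σ hσ ψ hψ hq, coeff_tau σ hq i hb, qdiv_add_qmod,
        sigma_sInv, mul_comm]
    · rw [if_neg hbm, coeff_psi_ne σ hσ ψ hψ hq]
      · rw [mul_zero]
      · intro h0
        apply hbm
        have : q • qdiv q (a₀ - b) + b = a₀ := by
          have h1 := qdiv_add_qmod (q := q) (a₀ - b)
          rw [h0, add_zero] at h1
          rw [h1, tsub_add_cancel_of_le hba]
        rw [← this, qmod_mul_add hb]
  · rw [if_neg hba, if_neg]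
    intro hbm
    apply hba
    subst hbm
    rw [Finsupp.le_def]
    intro j
    simp only [qmod_apply]
    exact Nat.mod_le _ _

lemma reconstruct (hq : 0 < q) (s : MvPolynomial (Fin n) K) :
    s = ∑ b ∈ Bf q s, ∑ i ∈ If σ s, monomial b ((bas σ i : K)) * ψ (tau q σ i b s) := by
  apply MvPolynomial.ext
  intro a₀
  rw [MvPolynomial.coeff_sum]
  have hterm : ∀ b ∈ Bf q s,
      coeff a₀ (∑ i ∈ If σ s, monomial b ((bas σ i : K)) * ψ (tau q σ i b s)) =
        if b = qmod q a₀ then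
          ∑ i ∈ If σ s, (((bas σ).repr (coeff a₀ s) i : K) * (bas σ i : K)) else 0 := by
    intro b hbs
    rw [MvPolynomial.coeff_sum,
      Finset.sum_congr rfl (fun i _ => coeff_term σ hσ ψ hψ hq i (Bf_lt hq hbs) s a₀)]
    by_cases h : b = qmod q a₀
    · simp only [if_pos h]
    · simp only [if_neg h, Finset.sum_const_zero]
  rw [Finset.sum_congr rfl hterm, Finset.sum_ite_eq' (Bf q s) (qmod q a₀)]
  by_cases ha : a₀ ∈ s.support
  · have hmem : qmod q a₀ ∈ Bf q s := Finset.mem_image_of_mem _ ha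
    rw [if_pos hmem]
    exact (basis_sum σ (coeff a₀ s) _ (fun i hi => Finset.mem_biUnion.mpr ⟨a₀, ha, hi⟩)).symm
  · have h0 : coeff a₀ s = 0 := MvPolynomial.notMem_support_iff.mp ha
    rw [h0]
    split_ifs
    · simp [h0]
    · rfl

variable {I : Ideal (MvPolynomial (Fin n) K)}

lemma frobPow_span_eq (I : Ideal (MvPolynomial (Fin n) K)) :
    Ideal.span ((fun a => a ^ q) '' (I : Set (MvPolynomial (Fin n) K))) =
      Ideal.span (ψ '' (I : Set (MvPolynomial (Fin n) K))) := by
  congr 1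
  exact Set.image_congr fun a _ => (hψ a).symm

lemma mem_span_pow_iff (hq : 0 < q) (s : MvPolynomial (Fin n) K) :
    s ∈ Ideal.span ((fun a => a ^ q) '' (I : Set (MvPolynomial (Fin n) K))) ↔
      ∀ (i : bIdx σ) (b : Fin n →₀ ℕ), (∀ j, b j < q) → tau q σ i b s ∈ I := by
  rw [frobPow_span_eq σ hσ ψ hψ]
  constructor
  · intro hs
    induction hs using Submodule.span_induction with
    | mem x hx =>
      obtain ⟨v, hv, rfl⟩ := hx
      intro i b hb
      rw [← one_mul (ψ v), tau_mul_psi σ hσ ψ hψ hq i hb]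
      exact Ideal.mul_mem_left I _ hv
    | zero =>
      intro i b hb
      rw [tau_zero σ hq i hb]
      exact zero_mem I
    | add x y hx hy ihx ihy =>
      intro i b hb
      rw [tau_add σ hq i hb]
      exact add_mem (ihx i b hb) (ihy i b hb)
    | smul r x hx ih =>
      intro i b hb
      have hx' : r * x = ∑ b' ∈ Bf q x, ∑ i' ∈ If σ x,
          (r * monomial b' ((bas σ i' : K))) * ψ (tau q σ i' b' x) := by
        conv_lhs => rw [reconstruct σ hσ ψ hψ hq x]
        rw [Finset.mul_sum]
        refine Finset.sum_congr rfl fun b' _ => ?_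
        rw [Finset.mul_sum]
        exact Finset.sum_congr rfl fun i' _ => (mul_assoc _ _ _).symm
      rw [smul_eq_mul, hx', tau_sum σ hq i hb]
      refine Ideal.sum_mem _ fun b' hb' => ?_
      rw [tau_sum σ hq i hb]
      refine Ideal.sum_mem _ fun i' hi' => ?_
      rw [tau_mul_psi σ hσ ψ hψ hq i hb]
      exact Ideal.mul_mem_left I _ (ih i' b' (Bf_lt hq hb'))
  · intro h
    rw [reconstruct σ hσ ψ hψ hq s]
    refine Ideal.sum_mem _ fun b hbs => ?_
    refine Ideal.sum_mem _ fun i his => ?_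
    refine Ideal.mul_mem_left _ _ ?_
    exact Ideal.subset_span ⟨tau q σ i b s, h i b (Bf_lt hq hbs), rfl⟩

omit hσ hψ in
lemma tau_eq_zero_of_not_mem (hq : 0 < q) {g : MvPolynomial (Fin n) K} {i : bIdx σ}
    {b : Fin n →₀ ℕ} (hb : ∀ j, b j < q)
    (h : ¬(b ∈ Bf q g ∧ i ∈ If σ g)) : tau q σ i b g = 0 := by
  apply MvPolynomial.ext
  intro c
  rw [coeff_tau σ hq i hb, MvPolynomial.coeff_zero]
  by_cases hBf : b ∈ Bf q g
  · have hIf : i ∉ If σ g := fun hi => h ⟨hBf, hi⟩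
    rw [repr_zero_of_not_mem_If σ hIf, map_zero]
  · have hc : coeff (q • c + b) g = 0 := by
      by_contra hne
      exact hBf (Finset.mem_image.mpr ⟨q • c + b, MvPolynomial.mem_support_iff.mpr hne,
        qmod_mul_add hb c⟩)
    rw [hc]
    simp

lemma mem_colon_iff (hq : 0 < q) (I : Ideal (MvPolynomial (Fin n) K))
    (g : MvPolynomial (Fin n) K)
    (hP : ((Ideal.span ((fun a => a ^ q) '' (I : Set (MvPolynomial (Fin n) K)))).colon
      (Ideal.span {g})).IsPrime) (h : MvPolynomial (Fin n) K) :
    h ∈ (Ideal.span ((fun a => a ^ q) '' (I : Set (MvPolynomial (Fin n) K)))).colon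
        (Ideal.span {g}) ↔
      ∀ (i : bIdx σ) (b : Fin n →₀ ℕ), (∀ j, b j < q) →
        h ∈ I.colon (Ideal.span {tau q σ i b g}) := by
  constructor
  · intro hh i b hb
    rw [Ideal.mem_colon_span_singleton]
    have h1 : h ^ q ∈ (Ideal.span ((fun a => a ^ q) '' (I : Set (MvPolynomial (Fin n) K)))).colon
        (Ideal.span {g}) := Ideal.pow_mem_of_mem _ hh q hq
    rw [Ideal.mem_colon_span_singleton] at h1
    have h2 : h ^ q * g = g * ψ h := by rw [hψ, mul_comm]
    rw [h2] at h1
    have h3 := (mem_span_pow_iff σ hσ ψ hψ hq _).mp h1 i b hb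
    rw [tau_mul_psi σ hσ ψ hψ hq i hb] at h3
    rwa [mul_comm]
  · intro hh
    apply hP.mem_of_pow_mem q
    rw [Ideal.mem_colon_span_singleton]
    have h2 : h ^ q * g = g * ψ h := by rw [hψ, mul_comm]
    rw [h2, mem_span_pow_iff σ hσ ψ hψ hq]
    intro i b hb
    rw [tau_mul_psi σ hσ ψ hψ hq i hb, mul_comm]
    exact Ideal.mem_colon_span_singleton.mp (hh i b hb)

lemma colon_extract (hq : 0 < q) (I : Ideal (MvPolynomial (Fin n) K))
    (g : MvPolynomial (Fin n) K)
    (hP : ((Ideal.span ((fun a => a ^ q) '' (I : Set (MvPolynomial (Fin n) K)))).colon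
      (Ideal.span {g})).IsPrime) :
    ∃ (i : bIdx σ) (b : Fin n →₀ ℕ), (∀ j, b j < q) ∧ tau q σ i b g ≠ 0 ∧
      I.colon (Ideal.span {tau q σ i b g}) =
        (Ideal.span ((fun a => a ^ q) '' (I : Set (MvPolynomial (Fin n) K)))).colon
          (Ideal.span {g}) := by
  classical
  set P := (Ideal.span ((fun a => a ^ q) '' (I : Set (MvPolynomial (Fin n) K)))).colon
    (Ideal.span {g}) with hPdef
  set E : Finset ((Fin n →₀ ℕ) × bIdx σ) := (Bf q g) ×ˢ (If σ g) with hE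
  set C : (Fin n →₀ ℕ) × bIdx σ → Ideal (MvPolynomial (Fin n) K) :=
    fun x => I.colon (Ideal.span {tau q σ x.2 x.1 g}) with hC
  have hPC : P = E.inf C := by
    apply le_antisymm
    · refine Finset.le_inf fun x hx => fun h hh => ?_
      exact (mem_colon_iff σ hσ ψ hψ hq I g hP h).mp hh x.2 x.1
        (Bf_lt hq (Finset.mem_product.mp hx).1)
    · intro h hh
      rw [hPdef]
      rw [mem_colon_iff σ hσ ψ hψ hq I g hP h]
      intro i b hb
      by_cases hmem : (b, i) ∈ E
      · exact (Finset.inf_le (f := C) hmem : E.inf C ≤ C (b, i)) hh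
      · have hz : tau q σ i b g = 0 := by
          refine tau_eq_zero_of_not_mem σ hq hb ?_
          rintro ⟨h1, h2⟩
          exact hmem (Finset.mem_product.mpr ⟨h1, h2⟩)
        rw [Ideal.mem_colon_span_singleton, hz, mul_zero]
        exact zero_mem I
  obtain ⟨x, hxE, hle⟩ := hP.inf_le'.mp (le_of_eq hPC.symm)
  have hPle : P ≤ C x := hPC.le.trans (Finset.inf_le hxE)
  have htne : tau q σ x.2 x.1 g ≠ 0 := by
    intro h0
    apply hP.ne_top
    apply (Ideal.eq_top_iff_one _).mpr
    apply hle
    rw [hC, Ideal.mem_colon_span_singleton, h0, mul_zero]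
    exact zero_mem I
  exact ⟨x.2, x.1, Bf_lt hq (Finset.mem_product.mp hxE).1, htne, le_antisymm hle hPle⟩

lemma tau_homogeneous (hq : 0 < q) (i : bIdx σ) {b : Fin n →₀ ℕ} (hb : ∀ j, b j < q)
    {s : MvPolynomial (Fin n) K} {d : ℕ} (hs : s.IsHomogeneous d)
    (hne : tau q σ i b s ≠ 0) :
    ∃ d', (tau q σ i b s).IsHomogeneous d' ∧ q * d' ≤ d := by
  obtain ⟨c₀, hc₀⟩ := MvPolynomial.support_nonempty.mpr hne
  have h₀ : coeff c₀ (tau q σ i b s) ≠ 0 := MvPolynomial.mem_support_iff.mp hc₀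
  have key : ∀ c, coeff c (tau q σ i b s) ≠ 0 →
      q * Finsupp.weight 1 c + Finsupp.weight 1 b = d := by
    intro c hcne
    rw [coeff_tau σ hq i hb] at hcne
    have hcoeff : coeff (q • c + b) s ≠ 0 := by
      intro h0
      rw [h0] at hcne
      simp at hcne
    have := hs hcoeff
    rw [← this, map_add, map_nsmul, smul_eq_mul]
  refine ⟨Finsupp.weight 1 c₀, ?_, ?_⟩
  · intro c hcne
    have h1 := key c hcne
    have h2 := key c₀ h₀
    have : q * (Finsupp.weight 1 c) = q * (Finsupp.weight 1 c₀) := by omega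
    exact Nat.eq_of_mul_eq_mul_left hq this
  · have h2 := key c₀ h₀
    omega

end psi

end Tau

end FrobAux

end Machinery

noncomputable section Upper

namespace FrobUpper

lemma decompose_eq (r : MvPolynomial (Fin n) K) (j : ℕ) :
    (DirectSum.decompose (homogeneousSubmodule (Fin n) K) r j : MvPolynomial (Fin n) K) =
      homogeneousComponent j r :=
  MvPolynomial.decomposition.decompose'_apply r j

lemma degree_of_homog {f : MvPolynomial (Fin n) K} {d : ℕ} (hf : f.IsHomogeneous d)
    {v : Fin n →₀ ℕ} (hv : coeff v f ≠ 0) : v.degree = d := by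
  have := hf hv
  rwa [Finsupp.degree_eq_weight_one]

lemma hc_mul {f₀ : MvPolynomial (Fin n) K} {d₀ : ℕ} (hf₀ : f₀.IsHomogeneous d₀)
    (x : MvPolynomial (Fin n) K) (j : ℕ) :
    homogeneousComponent j x * f₀ = homogeneousComponent (j + d₀) (x * f₀) := by
  apply MvPolynomial.ext
  intro a
  rw [MvPolynomial.coeff_mul, coeff_homogeneousComponent]
  by_cases ha : a.degree = j + d₀
  · rw [if_pos ha, MvPolynomial.coeff_mul]
    refine Finset.sum_congr rfl fun uv huv => ?_
    rw [coeff_homogeneousComponent]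
    by_cases hv : coeff uv.2 f₀ = 0
    · rw [hv, mul_zero, mul_zero]
    · have hdv : uv.2.degree = d₀ := degree_of_homog hf₀ hv
      have hsum : uv.1.degree + uv.2.degree = a.degree := by
        simp only [Finsupp.degree_eq_weight_one, ← map_add, Finset.HasAntidiagonal.mem_antidiagonal.mp huv]
      rw [if_pos (by omega)]
  · rw [if_neg ha]
    apply Finset.sum_eq_zero
    intro uv huv
    rw [coeff_homogeneousComponent]
    by_cases hv : coeff uv.2 f₀ = 0
    · rw [hv, mul_zero]
    · have hdv : uv.2.degree = d₀ := degree_of_homog hf₀ hv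
      have hsum : uv.1.degree + uv.2.degree = a.degree := by
        simp only [Finsupp.degree_eq_weight_one, ← map_add, Finset.HasAntidiagonal.mem_antidiagonal.mp huv]
      rw [if_neg (by omega), zero_mul]

lemma colon_isHomogeneous {J : Ideal (MvPolynomial (Fin n) K)}
    (hJ : J.IsHomogeneous (homogeneousSubmodule (Fin n) K))
    {f₀ : MvPolynomial (Fin n) K} {d₀ : ℕ} (hf₀ : f₀.IsHomogeneous d₀) :
    (J.colon (Ideal.span {f₀})).IsHomogeneous (homogeneousSubmodule (Fin n) K) := by
  intro j x hx
  rw [Ideal.mem_colon_span_singleton] at hx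
  rw [decompose_eq, Ideal.mem_colon_span_singleton, hc_mul hf₀]
  have := hJ (j + d₀) hx
  rwa [decompose_eq] at this

lemma colon_eq_annihilator (J : Ideal (MvPolynomial (Fin n) K)) (g : MvPolynomial (Fin n) K) :
    J.colon (Ideal.span {g}) =
      (Submodule.span (MvPolynomial (Fin n) K) {(Ideal.Quotient.mk J g :
        MvPolynomial (Fin n) K ⧸ J)}).annihilator := by
  ext h
  rw [Ideal.mem_colon_span_singleton, Submodule.mem_annihilator_span_singleton]
  have hsm : h • (Ideal.Quotient.mk J g) = Ideal.Quotient.mk J (h * g) := rfl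
  rw [hsm, Ideal.Quotient.eq_zero_iff_mem]

/-- Every proper graded ideal has a homogeneous element whose colon ideal is an
associated prime. -/
lemma exists_witness {J : Ideal (MvPolynomial (Fin n) K)}
    (hgr : J.IsHomogeneous (homogeneousSubmodule (Fin n) K)) (htop : J ≠ ⊤) :
    ∃ (d : ℕ) (f : MvPolynomial (Fin n) K), f.IsHomogeneous d ∧ ∃ 𝔭 ∈ Ass J,
      J.colon (Ideal.span {f}) = 𝔭 := by
  classical
  set A : Set (Ideal (MvPolynomial (Fin n) K)) :=
    {T | ∃ (f : MvPolynomial (Fin n) K) (d : ℕ), f.IsHomogeneous d ∧ f ∉ J ∧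
      T = J.colon (Ideal.span {f})} with hA
  have hone : (1 : MvPolynomial (Fin n) K) ∉ J := fun h1 => htop ((Ideal.eq_top_iff_one J).mpr h1)
  have hAne : A.Nonempty :=
    ⟨J.colon (Ideal.span {(1 : MvPolynomial (Fin n) K)}), 1, 0, MvPolynomial.isHomogeneous_one _ _, hone, by rfl⟩
  obtain ⟨P, hPA, hmax⟩ := set_has_maximal_iff_noetherian.mpr inferInstance A hAne
  obtain ⟨f₀, d₀, hf₀, hf₀J, rfl⟩ := hPA
  have hne : J.colon (Ideal.span {f₀}) ≠ ⊤ := by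
    intro htop'
    apply hf₀J
    have h1 : (1 : MvPolynomial (Fin n) K) ∈ J.colon (Ideal.span {f₀}) := htop' ▸ trivial
    rw [Ideal.mem_colon_span_singleton, one_mul] at h1
    exact h1
  have hhom := colon_isHomogeneous hgr hf₀
  have hprime : (J.colon (Ideal.span {f₀})).IsPrime := by
    refine hhom.isPrime_of_homogeneous_mem_or_mem hne ?_
    rintro x y ⟨ix, hx⟩ ⟨iy, hy⟩ hxy
    by_cases hyP : y ∈ J.colon (Ideal.span {f₀})
    · exact Or.inr hyP
    · left
      have hyf : y * f₀ ∉ J := by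
        rwa [Ideal.mem_colon_span_singleton] at hyP
      have hmem : J.colon (Ideal.span {y * f₀}) ∈ A :=
        ⟨y * f₀, iy + d₀, ((mem_homogeneousSubmodule _ _).mp hy).mul hf₀, hyf, rfl⟩
      have hle : J.colon (Ideal.span {f₀}) ≤ J.colon (Ideal.span {y * f₀}) := by
        intro h hh
        rw [Ideal.mem_colon_span_singleton] at hh ⊢
        have : h * (y * f₀) = y * (h * f₀) := by ring
        rw [this]
        exact Ideal.mul_mem_left J y hh
      have heq : J.colon (Ideal.span {f₀}) = J.colon (Ideal.span {y * f₀}) :=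
        hle.lt_or_eq.resolve_left (hmax _ hmem)
      rw [heq, Ideal.mem_colon_span_singleton]
      rw [Ideal.mem_colon_span_singleton] at hxy
      have : x * (y * f₀) = x * y * f₀ := by ring
      rw [this]
      exact hxy
  refine ⟨d₀, f₀, hf₀, J.colon (Ideal.span {f₀}), ?_, rfl⟩
  exact isAssociatedPrime_iff.mpr ⟨hprime, Ideal.Quotient.mk J f₀, by
    rw [colon_eq_annihilator J f₀, Submodule.bot_colon']⟩

end FrobUpper

namespace FrobUpper

lemma frobPow_le (I : Ideal (MvPolynomial (Fin n) K)) (q : ℕ) (hq : 0 < q) :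
    frobPow I q ≤ I := by
  rw [frobPow, Ideal.span_le]
  rintro _ ⟨a, ha, rfl⟩
  exact Ideal.pow_mem_of_mem I ha q hq

lemma frobPow_ne_top (I : Ideal (MvPolynomial (Fin n) K)) (q : ℕ) (hq : 0 < q)
    (htop : I ≠ ⊤) : frobPow I q ≠ ⊤ :=
  fun h => htop (top_le_iff.mp (h ▸ frobPow_le I q hq))

variable (p : ℕ) (hp : p.Prime) [CharP K p]

/-- the `e`-th iterated Frobenius endomorphism of the polynomial ring -/
def frobHom (hp : p.Prime) [CharP K p] (e : ℕ) :
    MvPolynomial (Fin n) K →+* MvPolynomial (Fin n) K :=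
  haveI : Fact p.Prime := ⟨hp⟩
  iterateFrobenius (MvPolynomial (Fin n) K) p e

lemma frobHom_apply (e : ℕ) (s : MvPolynomial (Fin n) K) :
    frobHom p hp e s = s ^ p ^ e := by
  haveI : Fact p.Prime := ⟨hp⟩
  rw [frobHom, iterateFrobenius_def]

include hp

lemma frobPow_eq_map (e : ℕ) (I : Ideal (MvPolynomial (Fin n) K)) :
    frobPow I (p ^ e) = Ideal.map (frobHom p hp e) I := by
  apply le_antisymm
  · rw [frobPow, Ideal.span_le]
    rintro _ ⟨a, ha, rfl⟩
    have h := Ideal.mem_map_of_mem (frobHom p hp e) ha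
    rw [frobHom_apply] at h
    exact h
  · rw [Ideal.map_le_iff_le_comap]
    intro a ha
    rw [Ideal.mem_comap, frobHom_apply]
    exact Ideal.subset_span ⟨a, ha, rfl⟩

lemma frobPow_isHomogeneous (e : ℕ) {I : Ideal (MvPolynomial (Fin n) K)}
    (hgr : I.IsHomogeneous (homogeneousSubmodule (Fin n) K)) :
    (frobPow I (p ^ e)).IsHomogeneous (homogeneousSubmodule (Fin n) K) := by
  haveI : Fact p.Prime := ⟨hp⟩
  rw [frobPow_eq_map p hp e]
  obtain ⟨S₀, rfl⟩ := (Ideal.IsHomogeneous.iff_exists _ _).mp hgr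
  rw [Ideal.map_span]
  apply Ideal.homogeneous_span
  rintro x ⟨y, ⟨z, hz, rfl⟩, rfl⟩
  obtain ⟨iz, hmem⟩ := z.2
  refine ⟨iz * p ^ e, ?_⟩
  rw [mem_homogeneousSubmodule, frobHom_apply]
  exact ((mem_homogeneousSubmodule _ _).mp hmem).pow (p ^ e)

lemma frobPow_comp (e : ℕ) (I : Ideal (MvPolynomial (Fin n) K)) :
    frobPow (frobPow I (p ^ e)) p = frobPow I (p ^ (e + 1)) := by
  haveI : Fact p.Prime := ⟨hp⟩
  have h1 : frobPow (frobPow I (p ^ e)) p = frobPow (frobPow I (p ^ e)) (p ^ 1) := by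
    rw [pow_one]
  rw [h1, frobPow_eq_map p hp 1, frobPow_eq_map p hp e, Ideal.map_map,
    frobPow_eq_map p hp (e + 1)]
  congr 1
  refine RingHom.ext fun x => ?_
  rw [RingHom.comp_apply, frobHom_apply, frobHom_apply, frobHom_apply, ← pow_mul, pow_one,
    ← pow_succ]

lemma main_ineq (e : ℕ) {J : Ideal (MvPolynomial (Fin n) K)}
    (hgr : J.IsHomogeneous (homogeneousSubmodule (Fin n) K)) (htop : J ≠ ⊤) :
    p ^ e * vnum J ≤ vnum (frobPow J (p ^ e)) := by
  haveI : Fact p.Prime := ⟨hp⟩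
  have hq : 0 < p ^ e := pow_pos hp.pos e
  set σ : K →+* K := iterateFrobenius K p e with hσdef
  have hσ : ∀ x, σ x = x ^ p ^ e := fun x => iterateFrobenius_def p e x
  set ψ : MvPolynomial (Fin n) K →+* MvPolynomial (Fin n) K :=
    iterateFrobenius (MvPolynomial (Fin n) K) p e with hψdef
  have hψ : ∀ s, ψ s = s ^ p ^ e := fun s => iterateFrobenius_def p e s
  have hFgr := frobPow_isHomogeneous p hp e hgr
  have hFtop : frobPow J (p ^ e) ≠ ⊤ := frobPow_ne_top J (p ^ e) hq htop
  have hSne : {d : ℕ | ∃ f : MvPolynomial (Fin n) K, f.IsHomogeneous d ∧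
      ∃ 𝔭 ∈ Ass (frobPow J (p ^ e)), (frobPow J (p ^ e)).colon (Ideal.span {f}) = 𝔭}.Nonempty := by
    obtain ⟨d, f, hf, 𝔭, h𝔭, hcol⟩ := exists_witness hFgr hFtop
    exact ⟨d, f, hf, 𝔭, h𝔭, hcol⟩
  have hmem := Nat.sInf_mem hSne
  rw [show sInf {d : ℕ | ∃ f : MvPolynomial (Fin n) K, f.IsHomogeneous d ∧
      ∃ 𝔭 ∈ Ass (frobPow J (p ^ e)), (frobPow J (p ^ e)).colon (Ideal.span {f}) = 𝔭}
      = vnum (frobPow J (p ^ e)) from rfl] at hmem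
  obtain ⟨f, hf, 𝔭, h𝔭, hcol⟩ := hmem
  have hP : ((Ideal.span ((fun a => a ^ p ^ e) ''
      (J : Set (MvPolynomial (Fin n) K)))).colon (Ideal.span {f})).IsPrime := by
    rw [show Ideal.span ((fun a => a ^ p ^ e) '' (J : Set (MvPolynomial (Fin n) K)))
      = frobPow J (p ^ e) from rfl, hcol]
    exact h𝔭.isPrime
  obtain ⟨i, b, hb, hne, heq⟩ := FrobAux.colon_extract σ hσ ψ hψ hq J f hP
  obtain ⟨d', hd', hqd'⟩ := FrobAux.tau_homogeneous σ hσ ψ hψ hq i hb hf hne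
  have htaueq : J.colon (Ideal.span {FrobAux.tau (p ^ e) σ i b f}) = 𝔭 := by
    rw [heq, show Ideal.span ((fun a => a ^ p ^ e) '' (J : Set (MvPolynomial (Fin n) K)))
      = frobPow J (p ^ e) from rfl, hcol]
  have h𝔭Ass : 𝔭 ∈ Ass J := by
    refine isAssociatedPrime_iff.mpr ⟨h𝔭.isPrime, Ideal.Quotient.mk J (FrobAux.tau (p ^ e) σ i b f), ?_⟩
    rw [← htaueq, colon_eq_annihilator, Submodule.bot_colon']
  have h1 : vnum J ≤ d' := Nat.sInf_le ⟨FrobAux.tau (p ^ e) σ i b f, hd', 𝔭, h𝔭Ass, htaueq⟩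
  calc p ^ e * vnum J ≤ p ^ e * d' := Nat.mul_le_mul_left _ h1
    _ ≤ vnum (frobPow J (p ^ e)) := hqd'

end FrobUpper

end Upper

theorem stmt12 {K : Type*} [Field K] {n : ℕ} (p : ℕ) (hp : p.Prime) [CharP K p]
    (I : Ideal (MvPolynomial (Fin n) K)) (hgr : IsGraded I) (htop : I ≠ ⊤) (hbot : I ≠ ⊥) :
    (∀ q : ℕ, (∃ e : ℕ, q = p ^ e) → 1 ≤ q → q * vnum I ≤ vnum (frobPow I q)) ∧
    Monotone (fun e : ℕ => (vnum (frobPow I (p ^ e)) : ℝ) / (p ^ e : ℝ)) := by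
  have hgr' : Ideal.IsHomogeneous (homogeneousSubmodule (Fin n) K) I := hgr

  constructor
  · rintro q ⟨e, rfl⟩ _
    exact FrobUpper.main_ineq p hp e hgr' htop
  · apply monotone_nat_of_le_succ
    intro e
    have hgr' := FrobUpper.frobPow_isHomogeneous p hp e hgr
    have htop' : frobPow I (p ^ e) ≠ ⊤ := FrobUpper.frobPow_ne_top _ _ (pow_pos hp.pos e) htop
    have key : p * vnum (frobPow I (p ^ e)) ≤ vnum (frobPow I (p ^ (e + 1))) := by
      have h := FrobUpper.main_ineq p hp 1 hgr' htop'
      rwa [pow_one, FrobUpper.frobPow_comp p hp e I] at h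
    have hp0 : (0 : ℝ) < (p : ℝ) := by exact_mod_cast hp.pos
    have hpe : (0 : ℝ) < (p : ℝ) ^ e := pow_pos hp0 e
    have hpe1 : (0 : ℝ) < (p : ℝ) ^ (e + 1) := pow_pos hp0 (e + 1)
    rw [div_le_div_iff₀ hpe hpe1]
    have hkey : ((p * vnum (frobPow I (p ^ e)) : ℕ) : ℝ) ≤
        (vnum (frobPow I (p ^ (e + 1))) : ℝ) := Nat.cast_le.mpr key
    push_cast at hkey
    calc (vnum (frobPow I (p ^ e)) : ℝ) * (p : ℝ) ^ (e + 1)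
        = ((p : ℝ) * vnum (frobPow I (p ^ e))) * (p : ℝ) ^ e := by ring
      _ ≤ (vnum (frobPow I (p ^ (e + 1))) : ℝ) * (p : ℝ) ^ e :=
          mul_le_mul_of_nonneg_right hkey hpe.le

end
end

section
/- Let S = K[x_1,…,x_n] be a standard graded polynomial ring over a field K of prime characteristic p, and let I ⊂ S be a proper nonzero radical graded ideal. Then the sequences e ↦ α_{p^e}(I)/p^e and e ↦ v(I^{[p^e]})/p^e converge to the same real number as e → ∞. -/
open MvPolynomial

attribute [local instance] MvPolynomial.gradedAlgebra

noncomputable section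

variable {K : Type*} [Field K] {n : ℕ}

/-! ### Auxiliary development -/

namespace Stmt18Aux

variable (p : ℕ)

/-! #### Part 1 : basic lemmas on Frobenius powers -/

theorem mem_frobPow_of_mem {I : Ideal (MvPolynomial (Fin n) K)} {a : MvPolynomial (Fin n) K}
    (ha : a ∈ I) (q : ℕ) : a ^ q ∈ frobPow I q :=
  Ideal.subset_span ⟨a, ha, rfl⟩

theorem frobPow_mono {I J : Ideal (MvPolynomial (Fin n) K)} (h : I ≤ J) (q : ℕ) :
    frobPow I q ≤ frobPow J q :=
  Ideal.span_mono (Set.image_mono h)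

theorem frobPow_le_self (I : Ideal (MvPolynomial (Fin n) K)) {q : ℕ} (hq : q ≠ 0) :
    frobPow I q ≤ I := by
  rw [frobPow, Ideal.span_le]
  rintro _ ⟨a, ha, rfl⟩
  obtain ⟨m, rfl⟩ := Nat.exists_eq_succ_of_ne_zero hq
  show a ^ (m + 1) ∈ I
  rw [pow_succ]
  exact I.mul_mem_left _ ha

variable (hp : p.Prime) [CharP K p]

include hp in
theorem expCharS : ExpChar (MvPolynomial (Fin n) K) p := by
  have : CharP (MvPolynomial (Fin n) K) p := inferInstance
  exact ExpChar.prime hp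

include hp in
theorem sum_pow {β : Type*} (t : Finset β) (F : β → MvPolynomial (Fin n) K) (e : ℕ) :
    (∑ b ∈ t, F b) ^ p ^ e = ∑ b ∈ t, F b ^ p ^ e := by
  haveI := expCharS (n := n) (K := K) p hp
  exact sum_pow_char_pow p e t F

include hp in
theorem frobPow_span (G : Set (MvPolynomial (Fin n) K)) (e : ℕ) :
    frobPow (Ideal.span G) (p ^ e) = Ideal.span ((fun a => a ^ p ^ e) '' G) := by
  have hq : p ^ e ≠ 0 := pow_ne_zero e hp.ne_zero
  haveI := expCharS (n := n) (K := K) p hp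
  apply le_antisymm
  · rw [frobPow, Ideal.span_le]
    rintro _ ⟨a, ha, rfl⟩
    show a ^ p ^ e ∈ Ideal.span ((fun a => a ^ p ^ e) '' G)
    induction ha using Submodule.span_induction with
    | mem x hx => exact Ideal.subset_span ⟨x, hx, rfl⟩
    | zero => rw [zero_pow hq]; exact zero_mem _
    | add x y hx hy ihx ihy => rw [add_pow_expChar_pow]; exact add_mem ihx ihy
    | smul r x hx ih => rw [smul_eq_mul, mul_pow]; exact Ideal.mul_mem_left _ _ ih
  · exact Ideal.span_mono (Set.image_mono Ideal.subset_span)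

include hp in
theorem frobPow_frobPow (I : Ideal (MvPolynomial (Fin n) K)) (e f : ℕ) :
    frobPow (frobPow I (p ^ e)) (p ^ f) = frobPow I (p ^ (e + f)) := by
  have h1 : frobPow I (p ^ e) = Ideal.span ((fun a => a ^ p ^ e) '' I) := rfl
  rw [h1, frobPow_span p hp, Set.image_image, frobPow]
  congr 1
  apply Set.image_congr'
  intro x
  rw [← pow_mul, ← pow_add]

omit hp in
theorem mul_frobPow {I J : Ideal (MvPolynomial (Fin n) K)} {u : MvPolynomial (Fin n) K}
    (hu : ∀ a ∈ I, u * a ∈ J) (e : ℕ) :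
    ∀ w ∈ frobPow I (p ^ e), u ^ p ^ e * w ∈ frobPow J (p ^ e) := by
  intro w hw
  induction hw using Submodule.span_induction with
  | mem x hx =>
    obtain ⟨a, ha, rfl⟩ := hx
    rw [← mul_pow]
    exact mem_frobPow_of_mem (hu a ha) _
  | zero => rw [mul_zero]; exact zero_mem _
  | add x y hx hy ihx ihy => rw [mul_add]; exact add_mem ihx ihy
  | smul r x hx ih =>
    rw [smul_eq_mul, mul_left_comm]
    exact Ideal.mul_mem_left _ _ ih

/-! #### Part 2 : the Frobenius coordinate system -/

theorem mapRange_addEquiv_single {α : Type*} {M N : Type*} [AddCommMonoid M] [AddCommMonoid N]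
    (f : M ≃+ N) (a : α) (b : M) :
    Finsupp.mapRange.addEquiv f (Finsupp.single a b) = Finsupp.single a (f b) :=
  Finsupp.mapRange_single (hf := map_zero f)

include hp in
theorem exists_frobSys (e : ℕ) :
    ∃ (ι : Type (max 0 u_1)) (mm : ι → MvPolynomial (Fin n) K) (tt : ι → ℕ)
      (Ψ : MvPolynomial (Fin n) K ≃+ (ι →₀ MvPolynomial (Fin n) K)),
      (∀ j, (mm j).IsHomogeneous (tt j)) ∧
      (∀ g : ι →₀ MvPolynomial (Fin n) K,
        Ψ.symm g = g.sum fun j s => s ^ p ^ e * mm j) := by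
  classical
  haveI : ExpChar K p := ExpChar.prime hp
  haveI : ExpChar (MvPolynomial (Fin n) K) p := expCharS p hp
  have hq0 : p ^ e ≠ 0 := pow_ne_zero e hp.ne_zero
  have hqpos : 0 < p ^ e := Nat.pos_of_ne_zero hq0
  haveI : NeZero (p ^ e) := ⟨hq0⟩
  set q := p ^ e with hqdef
  set φ : K →+* K := iterateFrobenius K p e with hφ
  have hφdef : ∀ c : K, φ c = c ^ q := fun c => rfl
  have hφinj : Function.Injective φ := φ.injective
  set k' : Subfield K := φ.fieldRange with hk'
  set mkk : K → k' := fun c => ⟨φ c, RingHom.mem_fieldRange.2 ⟨c, rfl⟩⟩ with hmkk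
  have hroot : ∀ y : k', ∃ c : K, φ c = (y : K) := fun y => RingHom.mem_fieldRange.1 y.2
  choose root hrootspec using hroot
  have hrootmk : ∀ c : K, root (mkk c) = c := by
    intro c
    apply hφinj
    rw [hrootspec]
  have hmkroot : ∀ y : k', mkk (root y) = y := by
    intro y
    apply Subtype.ext
    show φ (root y) = (y : K)
    exact hrootspec y
  set rootAdd : k' ≃+ K :=
    { toFun := root
      invFun := mkk
      left_inv := hmkroot
      right_inv := hrootmk
      map_add' := by
        intro y z
        apply hφinj
        rw [map_add, hrootspec, hrootspec, hrootspec]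
        push_cast
        ring } with hrootAdd
  set B := Module.Basis.ofVectorSpace k' K with hB
  set EK : K ≃+ (Module.Basis.ofVectorSpaceIndex k' K →₀ K) :=
    B.repr.toAddEquiv.trans (Finsupp.mapRange.addEquiv rootAdd) with hEK
  have hEKq : ∀ (c : K) (i : Module.Basis.ofVectorSpaceIndex k' K),
      EK (c ^ q * B i) = Finsupp.single i c := by
    intro c i
    have h1 : c ^ q * B i = (mkk c) • (B i) := rfl
    have h2 : B.repr (c ^ q * B i) = Finsupp.single i (mkk c) := by
      rw [h1, map_smul, B.repr_self, Finsupp.smul_single, smul_eq_mul, mul_one]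
    show Finsupp.mapRange.addEquiv rootAdd (B.repr.toAddEquiv (c ^ q * B i)) = _
    rw [show B.repr.toAddEquiv (c ^ q * B i) = B.repr (c ^ q * B i) from rfl, h2,
      mapRange_addEquiv_single]
    show Finsupp.single i (root (mkk c)) = Finsupp.single i c
    rw [hrootmk]
  set divE : (Fin n →₀ ℕ) → (Fin n →₀ ℕ) :=
    fun a => Finsupp.mapRange (· / q) (Nat.zero_div q) a with hdivE
  set modE : (Fin n →₀ ℕ) → (Fin n → Fin q) :=
    fun a i => ⟨a i % q, Nat.mod_lt _ hqpos⟩ with hmodE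
  set liftB : (Fin n → Fin q) → (Fin n →₀ ℕ) :=
    fun r => Finsupp.equivFunOnFinite.symm (fun i => (r i : ℕ)) with hliftB
  have hliftapp : ∀ (r : Fin n → Fin q) (i : Fin n), liftB r i = r i := by
    intro r i
    rfl
  have happ : ∀ (b : Fin n →₀ ℕ) (r : Fin n → Fin q) (i : Fin n),
      (q • b + liftB r) i = q * b i + r i := by
    intro b r i
    rw [Finsupp.add_apply, Finsupp.smul_apply, smul_eq_mul, hliftapp]
  have hdiv : ∀ (b : Fin n →₀ ℕ) (r : Fin n → Fin q), divE (q • b + liftB r) = b := by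
    intro b r
    ext i
    rw [hdivE]
    show ((q • b + liftB r) i) / q = b i
    rw [happ, Nat.mul_add_div hqpos, Nat.div_eq_of_lt (r i).2, add_zero]
  have hmod : ∀ (b : Fin n →₀ ℕ) (r : Fin n → Fin q), modE (q • b + liftB r) = r := by
    intro b r
    funext i
    apply Fin.ext
    show ((q • b + liftB r) i) % q = r i
    rw [happ, Nat.mul_add_mod]
    exact Nat.mod_eq_of_lt (r i).2
  have hrecomb : ∀ a : Fin n →₀ ℕ, q • divE a + liftB (modE a) = a := by
    intro a
    ext i
    rw [happ]
    show q * (a i / q) + (a i) % q = a i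
    rw [Nat.div_add_mod]
  set dEq : ((Fin n →₀ ℕ) × Module.Basis.ofVectorSpaceIndex k' K)
      ≃ (((Module.Basis.ofVectorSpaceIndex k' K × (Fin n → Fin q))) × (Fin n →₀ ℕ)) :=
    { toFun := fun x => ((x.2, modE x.1), divE x.1)
      invFun := fun y => (q • y.2 + liftB y.1.2, y.1.1)
      left_inv := by
        rintro ⟨a, i⟩
        simp only
        rw [hrecomb]
      right_inv := by
        rintro ⟨⟨i, r⟩, b⟩
        simp only
        rw [hdiv, hmod] } with hdEq
  set e0 : MvPolynomial (Fin n) K ≃+ ((Fin n →₀ ℕ) →₀ K) := AddMonoidAlgebra.coeffAddEquiv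
    with he0
  set E1 := Finsupp.mapRange.addEquiv (ι := Fin n →₀ ℕ) EK with hE1
  set E2 := (Finsupp.finsuppProdLEquiv ℕ (α := Fin n →₀ ℕ)
    (β := Module.Basis.ofVectorSpaceIndex k' K) (M := K)).toAddEquiv.symm with hE2
  set E3 := Finsupp.domCongr (M := K) dEq with hE3
  set E4 := (Finsupp.finsuppProdLEquiv ℕ (α := Module.Basis.ofVectorSpaceIndex k' K × (Fin n → Fin q))
    (β := Fin n →₀ ℕ) (M := K)).toAddEquiv with hE4
  set E5 := Finsupp.mapRange.addEquiv
    (ι := Module.Basis.ofVectorSpaceIndex k' K × (Fin n → Fin q)) e0.symm with hE5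
  set Ψ := e0.trans (E1.trans (E2.trans (E3.trans (E4.trans E5)))) with hΨdef
  set mm : (Module.Basis.ofVectorSpaceIndex k' K × (Fin n → Fin q)) → MvPolynomial (Fin n) K :=
    fun j => monomial (liftB j.2) ((B j.1 : K)) with hmm
  have hprodsymm : ∀ (x : Fin n →₀ ℕ) (y : Module.Basis.ofVectorSpaceIndex k' K) (v : K),
      E2 (Finsupp.single x (Finsupp.single y v)) = Finsupp.single (x, y) v := by
    intro x y v
    ext ⟨z, w⟩
    rw [hE2]
    show ((Finsupp.finsuppProdLEquiv ℕ).symm (Finsupp.single x (Finsupp.single y v))) (z, w) = _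
    rw [show ((Finsupp.finsuppProdLEquiv ℕ).symm (Finsupp.single x (Finsupp.single y v))) (z, w) = Finsupp.single x (Finsupp.single y v) z w from rfl]
    simp only [Finsupp.single_apply, Prod.ext_iff, ite_and]
    split <;> simp [Finsupp.single_apply]
  have hprodfwd : ∀ (x : Module.Basis.ofVectorSpaceIndex k' K × (Fin n → Fin q)) (y : Fin n →₀ ℕ)
      (v : K), E4 (Finsupp.single (x, y) v) = Finsupp.single x (Finsupp.single y v) := by
    intro x y v
    ext z w
    rw [hE4]
    show ((Finsupp.finsuppProdLEquiv ℕ) (Finsupp.single (x, y) v)) z w = _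
    rw [show ((Finsupp.finsuppProdLEquiv ℕ) (Finsupp.single (x, y) v)) z w = Finsupp.single (x, y) v (z, w) from rfl]
    simp [Finsupp.single_apply, Prod.ext_iff, ite_and, apply_ite (fun f : (Fin n →₀ ℕ) →₀ K => f w)]
  have hsingle : ∀ (a : Fin n →₀ ℕ) (c : K) (i : Module.Basis.ofVectorSpaceIndex k' K),
      Ψ (monomial a (c ^ q * B i)) = Finsupp.single (i, modE a) (monomial (divE a) c) := by
    intro a c i
    rw [hΨdef]
    show E5 (E4 (E3 (E2 (E1 (e0 (monomial a (c ^ q * B i))))))) = _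
    have s0 : e0 (monomial a (c ^ q * B i)) = Finsupp.single a (c ^ q * B i) := by
      rw [he0]
      rfl
    rw [s0]
    have s1 : E1 (Finsupp.single a (c ^ q * B i))
        = Finsupp.single a (Finsupp.single i c) := by
      rw [hE1, mapRange_addEquiv_single, hEKq]
    rw [s1, hprodsymm]
    have s3 : E3 (Finsupp.single (a, i) c)
        = Finsupp.single ((i, modE a), divE a) c := by
      rw [hE3, Finsupp.domCongr_apply, Finsupp.equivMapDomain_single]
      rfl
    rw [s3, hprodfwd]
    have s5 : E5 (Finsupp.single (i, modE a) (Finsupp.single (divE a) c))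
        = Finsupp.single (i, modE a) (monomial (divE a) c) := by
      rw [hE5, mapRange_addEquiv_single]
      rfl
    rw [s5]
  have hsm : ∀ (j : Module.Basis.ofVectorSpaceIndex k' K × (Fin n → Fin q))
      (s : MvPolynomial (Fin n) K), Ψ (s ^ q * mm j) = Finsupp.single j s := by
    intro j s
    induction s using MvPolynomial.induction_on' with
    | monomial a c =>
      obtain ⟨i, r⟩ := j
      have hmul : (monomial a c) ^ q * mm (i, r)
          = monomial (q • a + liftB r) (c ^ q * B i) := by
        rw [hmm]
        show (monomial a c) ^ q * monomial (liftB r) ((B i : K)) = _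
        rw [MvPolynomial.monomial_pow, MvPolynomial.monomial_mul]
      rw [hmul, hsingle, hmod, hdiv]
    | add s t ihs iht =>
      have hadd : (s + t) ^ q * mm j = s ^ q * mm j + t ^ q * mm j := by
        rw [hqdef, add_pow_expChar_pow, add_mul]
      rw [hadd, map_add, ihs, iht, ← Finsupp.single_add]
  refine ⟨Module.Basis.ofVectorSpaceIndex k' K × (Fin n → Fin q), mm,
    fun j => (liftB j.2).sum fun _ k => k, Ψ, ?_, ?_⟩
  · intro j
    rw [hmm]
    exact isHomogeneous_monomial _ rfl
  · intro g
    rw [AddEquiv.symm_apply_eq]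
    rw [map_finsuppSum]
    conv_lhs => rw [← Finsupp.sum_single g]
    apply Finsupp.sum_congr
    intro j _
    exact (hsm j (g j)).symm

section System

variable {e : ℕ} {ι : Type*} {mm : ι → MvPolynomial (Fin n) K} {tt : ι → ℕ}
  {Ψ : MvPolynomial (Fin n) K ≃+ (ι →₀ MvPolynomial (Fin n) K)}
  (hmm : ∀ j, (mm j).IsHomogeneous (tt j))
  (hΨ : ∀ g : ι →₀ MvPolynomial (Fin n) K,
    Ψ.symm g = g.sum fun j s => s ^ p ^ e * mm j)

include hp hΨ

theorem coord_Fsmul (a y : MvPolynomial (Fin n) K) :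
    Ψ (a ^ p ^ e * y) = a • Ψ y := by
  have hq : p ^ e ≠ 0 := pow_ne_zero e hp.ne_zero
  have h1 : Ψ.symm (a • Ψ y) = a ^ p ^ e * y := by
    rw [hΨ]
    rw [Finsupp.sum_smul_index' (fun j => by rw [zero_pow hq, zero_mul])]
    simp only [smul_eq_mul, mul_pow, mul_assoc]
    rw [← Finsupp.mul_sum]
    rw [← hΨ (Ψ y), Ψ.symm_apply_apply]
  rw [← h1, Ψ.apply_symm_apply]

theorem mem_frobPow_iff (J : Ideal (MvPolynomial (Fin n) K)) (y : MvPolynomial (Fin n) K) :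
    y ∈ frobPow J (p ^ e) ↔ ∀ j, Ψ y j ∈ J := by
  have hq : p ^ e ≠ 0 := pow_ne_zero e hp.ne_zero
  have key : ∀ (c x : MvPolynomial (Fin n) K), (∀ l, Ψ x l ∈ J) → ∀ j, Ψ (c * x) j ∈ J := by
    intro c x hx j
    have hx1 : x = (Ψ x).sum fun l s => s ^ p ^ e * mm l := by
      rw [← hΨ (Ψ x), Ψ.symm_apply_apply]
    have h2 : c * x = (Ψ x).sum fun l s => s ^ p ^ e * (c * mm l) := by
      conv_lhs => rw [hx1]
      rw [Finsupp.mul_sum]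
      apply Finsupp.sum_congr
      intro l _
      ring
    rw [h2, map_finsuppSum, Finsupp.sum_apply]
    apply Submodule.sum_mem
    intro l _
    show Ψ ((Ψ x) l ^ p ^ e * (c * mm l)) j ∈ J
    rw [coord_Fsmul p hp hΨ, Finsupp.smul_apply, smul_eq_mul]
    exact J.mul_mem_right _ (hx l)
  constructor
  · intro hy
    have hT : ∀ y' ∈ frobPow J (p ^ e), ∀ j, Ψ y' j ∈ J := by
      intro y' hy'
      induction hy' using Submodule.span_induction with
      | mem x hx =>
        obtain ⟨a, ha, rfl⟩ := hx
        intro j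
        show Ψ (a ^ p ^ e) j ∈ J
        have : (a : MvPolynomial (Fin n) K) ^ p ^ e = a ^ p ^ e * 1 := by ring
        rw [this, coord_Fsmul p hp hΨ, Finsupp.smul_apply, smul_eq_mul]
        exact J.mul_mem_right _ ha
      | zero => intro j; rw [map_zero]; simp only [Finsupp.coe_zero, Pi.zero_apply]; exact zero_mem J
      | add x y' hx hy' ihx ihy => intro j; rw [map_add, Finsupp.add_apply]; exact add_mem (ihx j) (ihy j)
      | smul r x hx ih =>
        rw [smul_eq_mul]
        exact key r x ih
    exact hT y hy
  · intro h
    have hx1 : y = (Ψ y).sum fun l s => s ^ p ^ e * mm l := by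
      rw [← hΨ (Ψ y), Ψ.symm_apply_apply]
    rw [hx1, Finsupp.sum]
    apply Submodule.sum_mem
    intro l _
    rw [mul_comm]
    exact Ideal.mul_mem_left _ _ (mem_frobPow_of_mem (h l) _)

omit hΨ in
include hmm in
theorem hc_pow_mul (s : MvPolynomial (Fin n) K) (j : ι) (d : ℕ) :
    homogeneousComponent d (s ^ p ^ e * mm j)
      = (if p ^ e ∣ (d - tt j) ∧ tt j ≤ d
          then homogeneousComponent ((d - tt j) / p ^ e) s else 0) ^ p ^ e * mm j := by
  classical
  have hq0 : 0 < p ^ e := pow_pos hp.pos e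
  conv_lhs => rw [← sum_homogeneousComponent s]
  rw [sum_pow p hp, Finset.sum_mul, map_sum]
  have hterm : ∀ u, homogeneousComponent d ((homogeneousComponent u s) ^ p ^ e * mm j)
      = if d = u * p ^ e + tt j then (homogeneousComponent u s) ^ p ^ e * mm j else 0 := by
    intro u
    exact homogeneousComponent_of_mem (((homogeneousComponent_isHomogeneous u s).pow _).mul (hmm j))
  rw [Finset.sum_congr rfl (fun u _ => hterm u)]
  by_cases hguard : p ^ e ∣ (d - tt j) ∧ tt j ≤ d
  · set u0 := (d - tt j) / p ^ e with hu0def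
    have hu0 : u0 * p ^ e + tt j = d := by
      rw [hu0def, Nat.div_mul_cancel hguard.1, Nat.sub_add_cancel hguard.2]
    have hiff : ∀ u, (d = u * p ^ e + tt j) ↔ u = u0 := by
      intro u
      constructor
      · intro h
        have : u * p ^ e = u0 * p ^ e := by omega
        exact Nat.eq_of_mul_eq_mul_right hq0 this
      · rintro rfl; exact hu0.symm
    rw [Finset.sum_congr rfl (fun u _ => if_congr (hiff u) rfl rfl)]
    rw [Finset.sum_ite_eq' (Finset.range (s.totalDegree + 1)) u0
      (fun u => (homogeneousComponent u s) ^ p ^ e * mm j)]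
    rw [if_pos hguard]
    by_cases hmemr : u0 ∈ Finset.range (s.totalDegree + 1)
    · rw [if_pos hmemr]
    · rw [if_neg hmemr]
      have : homogeneousComponent u0 s = 0 := by
        apply homogeneousComponent_eq_zero
        rw [Finset.mem_range, Nat.lt_succ_iff, not_le] at hmemr
        exact hmemr
      rw [this, zero_pow hq0.ne', zero_mul]
  · rw [if_neg hguard, zero_pow hq0.ne', zero_mul]
    apply Finset.sum_eq_zero
    intro u _
    have hne2 : ¬ (d = u * p ^ e + tt j) := by
      intro hcon
      exact hguard ⟨⟨u, by rw [mul_comm]; omega⟩, by omega⟩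
    rw [if_neg hne2]

include hmm in
theorem coord_homog {y : MvPolynomial (Fin n) K} {d : ℕ} (hy : y.IsHomogeneous d) (j : ι)
    (hne : Ψ y j ≠ 0) :
    ∃ dj, (Ψ y j).IsHomogeneous dj ∧ p ^ e * dj + tt j = d := by
  classical
  set g' : ι →₀ MvPolynomial (Fin n) K := Finsupp.onFinset (Ψ y).support
    (fun k => if p ^ e ∣ (d - tt k) ∧ tt k ≤ d
      then homogeneousComponent ((d - tt k) / p ^ e) (Ψ y k) else 0)
    (by
      intro k hk
      rw [Finsupp.mem_support_iff]
      intro h0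
      apply hk
      beta_reduce
      rw [h0]
      split <;> simp) with hg'def
  have hq0 : p ^ e ≠ 0 := pow_ne_zero e hp.ne_zero
  have hPhi : Ψ.symm g' = y := by
    rw [hΨ]
    rw [Finsupp.onFinset_sum _ (fun k => by rw [zero_pow hq0, zero_mul])]
    have hc1 : ∀ k ∈ (Ψ y).support,
        (if p ^ e ∣ (d - tt k) ∧ tt k ≤ d
          then homogeneousComponent ((d - tt k) / p ^ e) (Ψ y k) else 0) ^ p ^ e * mm k
        = homogeneousComponent d ((Ψ y k) ^ p ^ e * mm k) := by
      intro k _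
      exact (hc_pow_mul p hp hmm (Ψ y k) k d).symm
    rw [Finset.sum_congr rfl hc1, ← map_sum]
    have hsum : ∑ k ∈ (Ψ y).support, (Ψ y k) ^ p ^ e * mm k
        = (Ψ y).sum fun k s => s ^ p ^ e * mm k := rfl
    rw [hsum, ← hΨ (Ψ y), Ψ.symm_apply_apply]
    rw [homogeneousComponent_of_mem hy, if_pos rfl]
  have hgy : g' = Ψ y := by
    have h2 := congrArg Ψ hPhi
    rw [Ψ.apply_symm_apply] at h2
    exact h2
  have hj : Ψ y j = if p ^ e ∣ (d - tt j) ∧ tt j ≤ d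
      then homogeneousComponent ((d - tt j) / p ^ e) (Ψ y j) else 0 := by
    conv_lhs => rw [← hgy]
    rfl
  by_cases hguard : p ^ e ∣ (d - tt j) ∧ tt j ≤ d
  · refine ⟨(d - tt j) / p ^ e, ?_, ?_⟩
    · rw [if_pos hguard] at hj
      rw [hj]
      exact homogeneousComponent_isHomogeneous _ _
    · rw [mul_comm, Nat.div_mul_cancel hguard.1, Nat.sub_add_cancel hguard.2]
  · exfalso
    apply hne
    rw [hj, if_neg hguard]

end System

/-! #### Part 3 : consequences of the coordinate system -/

include hp in
theorem frobPow_colon_le_prime {𝔭 : Ideal (MvPolynomial (Fin n) K)} (h𝔭 : 𝔭.IsPrime) (e : ℕ)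
    {f x : MvPolynomial (Fin n) K} (hf : f ∉ frobPow 𝔭 (p ^ e))
    (hxf : x * f ∈ frobPow 𝔭 (p ^ e)) : x ∈ 𝔭 := by
  obtain ⟨ι, mm, tt, Ψ, hmm, hΨ⟩ := exists_frobSys (K := K) (n := n) p hp e
  by_contra hx
  apply hf
  have h2 : x ^ p ^ e * f ∈ frobPow 𝔭 (p ^ e) := by
    have h3 : x ^ p ^ e * f = x ^ (p ^ e - 1) * (x * f) := by
      rw [← mul_assoc, ← pow_succ]
      congr 2
      have : 1 ≤ p ^ e := Nat.one_le_pow e p hp.pos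
      omega
    rw [h3]
    exact Ideal.mul_mem_left _ _ hxf
  rw [mem_frobPow_iff p hp hΨ]
  intro j
  have h3 := (mem_frobPow_iff p hp hΨ 𝔭 _).1 h2 j
  rw [coord_Fsmul p hp hΨ, Finsupp.smul_apply, smul_eq_mul] at h3
  exact (h𝔭.mem_or_mem h3).resolve_left hx

include hp in
theorem kunz_colon (J : Ideal (MvPolynomial (Fin n) K)) (e : ℕ)
    (f x : MvPolynomial (Fin n) K) :
    x * f ^ p ^ e ∈ frobPow J (p ^ e) ↔ x ∈ frobPow (J.colon (Ideal.span {f})) (p ^ e) := by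
  obtain ⟨ι, mm, tt, Ψ, hmm, hΨ⟩ := exists_frobSys (K := K) (n := n) p hp e
  rw [mem_frobPow_iff p hp hΨ, mem_frobPow_iff p hp hΨ]
  have hcoord : ∀ j, Ψ (x * f ^ p ^ e) j = f * Ψ x j := by
    intro j
    rw [mul_comm, coord_Fsmul p hp hΨ, Finsupp.smul_apply, smul_eq_mul]
  constructor
  · intro h j
    rw [Ideal.mem_colon_span_singleton, mul_comm]
    rw [← hcoord j]
    exact h j
  · intro h j
    rw [hcoord j]
    have := h j
    rw [Ideal.mem_colon_span_singleton] at this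
    rwa [mul_comm] at this

include hp in
theorem exists_minimalPrime_not_mem_frobPow {I : Ideal (MvPolynomial (Fin n) K)}
    (hrad : I.IsRadical) (e : ℕ) {y : MvPolynomial (Fin n) K} (hy : y ∉ frobPow I (p ^ e)) :
    ∃ 𝔭 ∈ I.minimalPrimes, y ∉ frobPow 𝔭 (p ^ e) := by
  obtain ⟨ι, mm, tt, Ψ, hmm, hΨ⟩ := exists_frobSys (K := K) (n := n) p hp e
  rw [mem_frobPow_iff p hp hΨ] at hy
  push_neg at hy
  obtain ⟨j, hj⟩ := hy
  have hrad' : I.radical = I := hrad.radical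
  have h1 : Ψ y j ∉ sInf I.minimalPrimes := by
    rw [Ideal.sInf_minimalPrimes, hrad']
    exact hj
  rw [Ideal.mem_sInf] at h1
  push_neg at h1
  obtain ⟨𝔭, h𝔭, hnot⟩ := h1
  refine ⟨𝔭, h𝔭, fun hmem => hnot ?_⟩
  exact (mem_frobPow_iff p hp hΨ 𝔭 y).1 hmem j

/-! #### Part 4 : minimal primes and witnesses -/

theorem minimalPrimes_finite (I : Ideal (MvPolynomial (Fin n) K)) :
    I.minimalPrimes.Finite := by
  rw [Ideal.minimalPrimes_eq_comap]
  exact (minimalPrimes.finite_of_isNoetherianRing _).image _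

theorem minimalPrimes_isGraded {I : Ideal (MvPolynomial (Fin n) K)} (hgr : IsGraded I)
    {𝔭 : Ideal (MvPolynomial (Fin n) K)} (h𝔭 : 𝔭 ∈ I.minimalPrimes) : IsGraded 𝔭 := by
  have h𝔭p : 𝔭.IsPrime := h𝔭.1.1
  have hcore : ((𝔭.homogeneousCore (homogeneousSubmodule (Fin n) K)).toIdeal).IsPrime :=
    h𝔭p.homogeneousCore
  have hIle : I ≤ (𝔭.homogeneousCore (homogeneousSubmodule (Fin n) K)).toIdeal := by
    have h2 := Ideal.IsHomogeneous.toIdeal_homogeneousCore_eq_self (I := I) hgr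
    rw [← h2]
    exact Ideal.homogeneousCore_mono _ h𝔭.1.2
  have hle : (𝔭.homogeneousCore (homogeneousSubmodule (Fin n) K)).toIdeal ≤ 𝔭 :=
    Ideal.toIdeal_homogeneousCore_le _ _
  have hge := h𝔭.2 ⟨hcore, hIle⟩ hle
  have heq : 𝔭 = (𝔭.homogeneousCore (homogeneousSubmodule (Fin n) K)).toIdeal :=
    le_antisymm hge hle
  rw [IsGraded, heq]
  exact (𝔭.homogeneousCore (homogeneousSubmodule (Fin n) K)).isHomogeneous

/-- Homogeneous finite generating set of a graded ideal. -/
theorem exists_homog_gens {J : Ideal (MvPolynomial (Fin n) K)} (hJ : IsGraded J) :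
    ∃ G : Finset (MvPolynomial (Fin n) K),
      (∀ h ∈ G, h ≠ 0 ∧ h.IsHomogeneous h.totalDegree) ∧ J = Ideal.span G := by
  classical
  obtain ⟨G0, hG0⟩ : J.FG := IsNoetherian.noetherian J
  set T0 : Finset (MvPolynomial (Fin n) K) := G0.biUnion (fun g =>
    (Finset.range (g.totalDegree + 1)).image (fun i => homogeneousComponent i g)) with hT0
  refine ⟨T0.erase 0, ?_, ?_⟩
  · intro h hh
    have hh0 : h ≠ 0 := Finset.ne_of_mem_erase hh
    have hh1 := Finset.mem_of_mem_erase hh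
    rw [hT0, Finset.mem_biUnion] at hh1
    obtain ⟨g, _, hg⟩ := hh1
    rw [Finset.mem_image] at hg
    obtain ⟨i, _, rfl⟩ := hg
    have hhom : (homogeneousComponent i g).IsHomogeneous i :=
      homogeneousComponent_isHomogeneous i g
    refine ⟨hh0, ?_⟩
    rwa [hhom.totalDegree hh0]
  · apply le_antisymm
    · rw [← hG0, Ideal.span_le]
      intro g hg
      have : g = ∑ i ∈ Finset.range (g.totalDegree + 1), homogeneousComponent i g :=
        (sum_homogeneousComponent g).symm
      rw [this]
      apply sum_mem
      intro i hi
      by_cases h0 : homogeneousComponent i g = 0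
      · rw [h0]; exact zero_mem _
      · apply Ideal.subset_span
        apply Finset.mem_erase.2 ⟨h0, ?_⟩
        rw [hT0, Finset.mem_biUnion]
        exact ⟨g, hg, Finset.mem_image.2 ⟨i, hi, rfl⟩⟩
    · rw [Ideal.span_le]
      intro h hh
      have hh1 := Finset.mem_of_mem_erase hh
      rw [hT0, Finset.mem_biUnion] at hh1
      obtain ⟨g, hg, hg2⟩ := hh1
      rw [Finset.mem_image] at hg2
      obtain ⟨i, _, rfl⟩ := hg2
      have hgJ : g ∈ J := by
        rw [← hG0]; exact Ideal.subset_span hg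
      have hmem := hJ i hgJ
      have hbridge : ((DirectSum.decompose (homogeneousSubmodule (Fin n) K) g i :
          homogeneousSubmodule (Fin n) K i) : MvPolynomial (Fin n) K)
          = homogeneousComponent i g := by
        rw [← DirectSum.Decomposition.decompose'_eq]
        exact MvPolynomial.decomposition.decompose'_apply g i
      rwa [hbridge] at hmem

include hp in
/-- The climbing construction: a homogeneous element `f ∉ J^{[q]}` with `f·J ⊆ J^{[q]}`,
of degree at most `(q-1)·(sum of degrees of the given generators)`. -/
theorem climb {J : Ideal (MvPolynomial (Fin n) K)} (hJtop : J ≠ ⊤)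
    {G : Finset (MvPolynomial (Fin n) K)}
    (hG : ∀ h ∈ G, h ≠ 0 ∧ h.IsHomogeneous h.totalDegree) (hspan : J = Ideal.span G) (e : ℕ) :
    ∃ (f : MvPolynomial (Fin n) K) (d : ℕ), f.IsHomogeneous d ∧ f ∉ frobPow J (p ^ e) ∧
      (∀ x ∈ J, f * x ∈ frobPow J (p ^ e)) ∧ d ≤ (p ^ e - 1) * ∑ h ∈ G, h.totalDegree := by
  classical
  have hq0 : 0 < p ^ e := pow_pos hp.pos e
  have hfr : frobPow J (p ^ e) ≤ J := frobPow_le_self _ hq0.ne'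
  have h1 : (1 : MvPolynomial (Fin n) K) ∉ frobPow J (p ^ e) := by
    intro h
    exact hJtop (J.eq_top_iff_one.2 (hfr h))
  set F : ({x // x ∈ G} → ℕ) → MvPolynomial (Fin n) K :=
    fun a => ∏ h : {x // x ∈ G}, (h : MvPolynomial (Fin n) K) ^ a h with hF
  set A := (Fintype.piFinset (fun _ : {x // x ∈ G} => Finset.range (p ^ e))).filter
    (fun a => F a ∉ frobPow J (p ^ e)) with hAdef
  have h0A : (fun _ => 0) ∈ A := by
    rw [hAdef, Finset.mem_filter]
    constructor
    · rw [Fintype.mem_piFinset]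
      intro i
      rw [Finset.mem_range]
      exact hq0
    · have : F (fun _ => 0) = 1 := by
        simp only [hF]
        simp
      rw [this]
      exact h1
  obtain ⟨a, haA, hamax⟩ := A.exists_max_image (fun a => ∑ h, a h) ⟨_, h0A⟩
  rw [hAdef, Finset.mem_filter] at haA
  obtain ⟨habox, hanot⟩ := haA
  have hbound : ∀ h, a h ≤ p ^ e - 1 := by
    intro h
    have := Fintype.mem_piFinset.1 habox h
    rw [Finset.mem_range] at this
    omega
  have hGJ : ∀ h : {x // x ∈ G}, (h : MvPolynomial (Fin n) K) ∈ J := by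
    intro h
    rw [hspan]
    exact Ideal.subset_span h.2
  have hgen : ∀ h0 : {x // x ∈ G}, F a * (h0 : MvPolynomial (Fin n) K) ∈ frobPow J (p ^ e) := by
    intro h0
    by_cases hcase : a h0 + 1 < p ^ e
    · set a' := Function.update a h0 (a h0 + 1) with ha'
      have ha'box : a' ∈ Fintype.piFinset (fun _ : {x // x ∈ G} => Finset.range (p ^ e)) := by
        rw [Fintype.mem_piFinset]
        intro i
        rw [Finset.mem_range, ha']
        by_cases hih : i = h0
        · rw [hih, Function.update_self]
          exact hcase
        · rw [Function.update_of_ne hih]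
          have := Fintype.mem_piFinset.1 habox i
          rwa [Finset.mem_range] at this
      have hgt : ∑ h, a h < ∑ h, a' h := by
        apply Finset.sum_lt_sum
        · intro i _
          rw [ha']
          by_cases hih : i = h0
          · rw [hih, Function.update_self]; omega
          · rw [Function.update_of_ne hih]
        · refine ⟨h0, Finset.mem_univ _, ?_⟩
          rw [ha', Function.update_self]
          omega
      have ha'notA : a' ∉ A := by
        intro hmem
        exact absurd (hamax a' hmem) (not_le.2 hgt)
      have hFa' : F a' ∈ frobPow J (p ^ e) := by
        by_contra hno
        exact ha'notA (Finset.mem_filter.2 ⟨ha'box, hno⟩)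
      have hprod : F a' = F a * (h0 : MvPolynomial (Fin n) K) := by
        simp only [hF]
        rw [← Finset.mul_prod_erase Finset.univ _ (Finset.mem_univ h0),
            ← Finset.mul_prod_erase Finset.univ (fun h : {x // x ∈ G} => (h : MvPolynomial (Fin n) K) ^ a h)
              (Finset.mem_univ h0)]
        have hupd : ∀ i ∈ Finset.univ.erase h0,
            (i : MvPolynomial (Fin n) K) ^ a' i = (i : MvPolynomial (Fin n) K) ^ a i := by
          intro i hi
          rw [ha', Function.update_of_ne (Finset.mem_erase.1 hi).1]
        rw [Finset.prod_congr rfl hupd, ha', Function.update_self, pow_succ]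
        ring
      rw [← hprod]
      exact hFa'
    · have haq : a h0 + 1 = p ^ e := by
        have := hbound h0
        omega
      have hprod : F a * (h0 : MvPolynomial (Fin n) K)
          = (h0 : MvPolynomial (Fin n) K) ^ p ^ e
            * ∏ h ∈ Finset.univ.erase h0, (h : MvPolynomial (Fin n) K) ^ a h := by
        simp only [hF]
        rw [← Finset.mul_prod_erase Finset.univ (fun h : {x // x ∈ G} => (h : MvPolynomial (Fin n) K) ^ a h)
          (Finset.mem_univ h0), ← haq, pow_succ]
        ring
      rw [hprod]
      exact Ideal.mul_mem_right _ _ (mem_frobPow_of_mem (hGJ h0) _)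
  refine ⟨F a, ∑ h : {x // x ∈ G}, (h : MvPolynomial (Fin n) K).totalDegree * a h, ?_, hanot,
    ?_, ?_⟩
  · simp only [hF]
    apply IsHomogeneous.prod
    intro h _
    exact (hG h h.2).2.pow _
  · intro x hx
    rw [hspan] at hx
    induction hx using Submodule.span_induction with
    | mem g hg => exact hgen ⟨g, hg⟩
    | zero => rw [mul_zero]; exact zero_mem _
    | add u v hu hv ihu ihv => rw [mul_add]; exact add_mem ihu ihv
    | smul r u hu ih =>
      rw [smul_eq_mul, mul_left_comm]
      exact Ideal.mul_mem_left _ _ ih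
  · calc ∑ h : {x // x ∈ G}, (h : MvPolynomial (Fin n) K).totalDegree * a h
        ≤ ∑ h : {x // x ∈ G}, (h : MvPolynomial (Fin n) K).totalDegree * (p ^ e - 1) :=
          Finset.sum_le_sum (fun h _ => Nat.mul_le_mul_left _ (hbound h))
    _ = (p ^ e - 1) * ∑ h : {x // x ∈ G}, (h : MvPolynomial (Fin n) K).totalDegree := by
          rw [Finset.mul_sum]
          apply Finset.sum_congr rfl
          intro h _
          ring
    _ = (p ^ e - 1) * ∑ h ∈ G, h.totalDegree := by
          rw [← Finset.sum_coe_sort G (fun h => h.totalDegree)]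

include hp in
theorem frobPow_isGraded {I : Ideal (MvPolynomial (Fin n) K)} (hI : IsGraded I) (e : ℕ) :
    IsGraded (frobPow I (p ^ e)) := by
  obtain ⟨G, hG, rfl⟩ := exists_homog_gens hI
  rw [show ((G : Set (MvPolynomial (Fin n) K)) : Set _) = (G : Set _) from rfl]
  rw [frobPow_span p hp]
  apply Ideal.homogeneous_span
  rintro x ⟨g, hg, rfl⟩
  exact ⟨g.totalDegree * p ^ e, ((hG g hg).2.pow _)⟩

include hp in
/-- Existence of `u₀`: homogeneous, not in the given minimal prime, multiplying `𝔭` into `I`. -/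
theorem exists_u0 {I : Ideal (MvPolynomial (Fin n) K)} (hgr : IsGraded I) (hrad : I.IsRadical)
    {𝔭 : Ideal (MvPolynomial (Fin n) K)} (h𝔭 : 𝔭 ∈ I.minimalPrimes) :
    ∃ (u : MvPolynomial (Fin n) K) (du : ℕ), u.IsHomogeneous du ∧ u ∉ 𝔭 ∧
      ∀ g ∈ 𝔭, u * g ∈ I := by
  classical
  have h𝔭p : 𝔭.IsPrime := h𝔭.1.1
  have hfin := minimalPrimes_finite (K := K) (n := n) I
  set others := hfin.toFinset.erase 𝔭 with hoth
  set Joth : Ideal (MvPolynomial (Fin n) K) := others.inf id with hJoth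
  have hnotle : ¬ Joth ≤ 𝔭 := by
    intro hle
    obtain ⟨𝔮, h𝔮, h𝔮le⟩ := (h𝔭p.inf_le').1 hle
    rw [hoth, Finset.mem_erase, Set.Finite.mem_toFinset] at h𝔮
    have h𝔮min : 𝔮 ∈ I.minimalPrimes := h𝔮.2
    have := h𝔭.2 ⟨h𝔮min.1.1, h𝔮min.1.2⟩ h𝔮le
    exact h𝔮.1 (le_antisymm h𝔮le this)
  have hmin𝔮 : ∀ 𝔮 ∈ others, 𝔮 ∈ I.minimalPrimes := by
    intro 𝔮 h𝔮
    rw [hoth, Finset.mem_erase, Set.Finite.mem_toFinset] at h𝔮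
    exact h𝔮.2
  have hJh : Ideal.IsHomogeneous (homogeneousSubmodule (Fin n) K) Joth := by
    intro i x hx
    rw [hJoth, Submodule.mem_finsetInf] at hx ⊢
    intro 𝔮 h𝔮
    exact minimalPrimes_isGraded hgr (hmin𝔮 𝔮 h𝔮) i (hx 𝔮 h𝔮)
  obtain ⟨x, hxJ, hx𝔭⟩ := SetLike.not_le_iff_exists.1 hnotle
  have hsum := DirectSum.sum_support_decompose (homogeneousSubmodule (Fin n) K) x
  have hex : ∃ i, ((DirectSum.decompose (homogeneousSubmodule (Fin n) K) x i :
      homogeneousSubmodule (Fin n) K i) : MvPolynomial (Fin n) K) ∉ 𝔭 := by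
    by_contra hall
    push_neg at hall
    apply hx𝔭
    rw [← hsum]
    exact Submodule.sum_mem _ (fun i _ => hall i)
  obtain ⟨i, hi⟩ := hex
  set u : MvPolynomial (Fin n) K :=
    ((DirectSum.decompose (homogeneousSubmodule (Fin n) K) x i :
      homogeneousSubmodule (Fin n) K i) : MvPolynomial (Fin n) K) with hu
  have huJ : u ∈ Joth := hJh i hxJ
  refine ⟨u, i, ?_, hi, ?_⟩
  · exact (mem_homogeneousSubmodule i _).1 (SetLike.coe_mem _)
  · intro g hg
    have hu𝔮 : ∀ 𝔮 ∈ I.minimalPrimes, u * g ∈ 𝔮 := by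
      intro 𝔮 h𝔮
      by_cases h𝔮𝔭 : 𝔮 = 𝔭
      · rw [h𝔮𝔭]
        exact Ideal.mul_mem_left _ _ hg
      · have h𝔮o : 𝔮 ∈ others := by
          rw [hoth, Finset.mem_erase, Set.Finite.mem_toFinset]
          exact ⟨h𝔮𝔭, h𝔮⟩
        have hle : Joth ≤ 𝔮 := by
          rw [hJoth]
          exact Finset.inf_le h𝔮o
        exact Ideal.mul_mem_right _ _ (hle huJ)
    have hmem : u * g ∈ sInf I.minimalPrimes := Ideal.mem_sInf.2 (fun {𝔮} h𝔮 => hu𝔮 𝔮 h𝔮)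
    rwa [Ideal.sInf_minimalPrimes, hrad.radical] at hmem

include hp in
/-- The fixed witness `z_𝔭` at level `q₀ = p`. -/
theorem exists_z {I : Ideal (MvPolynomial (Fin n) K)} (hgr : IsGraded I) (hrad : I.IsRadical)
    {𝔭 : Ideal (MvPolynomial (Fin n) K)} (h𝔭 : 𝔭 ∈ I.minimalPrimes) :
    ∃ (z : MvPolynomial (Fin n) K) (dz : ℕ), z.IsHomogeneous dz ∧ z ∉ frobPow 𝔭 (p ^ 1) ∧
      ∀ g ∈ 𝔭, z * g ∈ frobPow I (p ^ 1) := by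
  have h𝔭p : 𝔭.IsPrime := h𝔭.1.1
  have hgr𝔭 : IsGraded 𝔭 := minimalPrimes_isGraded hgr h𝔭
  obtain ⟨G, hG, hspan⟩ := exists_homog_gens hgr𝔭
  obtain ⟨z1, d1, hz1h, hz1not, hz1mul, _⟩ := climb p hp h𝔭p.ne_top hG hspan 1
  obtain ⟨u, du, huh, hu𝔭, humul⟩ := exists_u0 p hp hgr hrad h𝔭
  refine ⟨z1 * u ^ p ^ 1, d1 + du * p ^ 1, hz1h.mul (huh.pow _), ?_, ?_⟩
  · intro hmem
    have h2 := (kunz_colon p hp 𝔭 1 u z1).1 hmem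
    have hcol : 𝔭.colon (Ideal.span {u}) = 𝔭 := by
      ext r
      rw [Ideal.mem_colon_span_singleton]
      exact ⟨fun h => (h𝔭p.mem_or_mem h).resolve_right hu𝔭, fun h => Ideal.mul_mem_right _ _ h⟩
    rw [hcol] at h2
    exact hz1not h2
  · intro g hg
    have h1 : z1 * g ∈ frobPow 𝔭 (p ^ 1) := hz1mul g hg
    have h2 := mul_frobPow (p := p) humul 1 _ h1
    have h3 : z1 * u ^ p ^ 1 * g = u ^ p ^ 1 * (z1 * g) := by ring
    rw [h3]
    exact h2

/-! #### Part 5 : the numerical inequalities -/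

section Main

variable {I : Ideal (MvPolynomial (Fin n) K)} (hgr : IsGraded I) (htop : I ≠ ⊤) (hbot : I ≠ ⊥)
  (hrad : I.IsRadical)

/-- The defining set of `alphaq`. -/
def Aset (I : Ideal (MvPolynomial (Fin n) K)) (q : ℕ) : Set ℕ :=
  {d : ℕ | ∃ f : MvPolynomial (Fin n) K, f.IsHomogeneous d ∧
    f ∈ (frobPow I q).colon I ∧ f ∉ frobPow I q}

theorem alphaq_eq_sInf (q : ℕ) : alphaq I q = sInf (Aset I q) := rfl

include hp hgr htop in
theorem Aset_all : ∃ C, ∀ e : ℕ, ∃ d ∈ Aset I (p ^ e), d ≤ C * p ^ e := by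
  obtain ⟨G, hG, hspan⟩ := exists_homog_gens hgr
  refine ⟨∑ h ∈ G, h.totalDegree, fun e => ?_⟩
  obtain ⟨f, d, hfh, hfnot, hfmul, hdle⟩ := climb p hp htop hG hspan e
  refine ⟨d, ⟨f, hfh, ?_, hfnot⟩, ?_⟩
  · rw [Submodule.mem_colon]
    intro a ha
    rw [smul_eq_mul]
    exact hfmul a ha
  · refine le_trans hdle ?_
    rw [mul_comm]
    exact Nat.mul_le_mul_left _ (Nat.sub_le _ _)

include hp hgr htop in
theorem Aset_ne (e : ℕ) : (Aset I (p ^ e)).Nonempty := by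
  obtain ⟨C, hC⟩ := Aset_all p hp hgr htop
  obtain ⟨d, hd, _⟩ := hC e
  exact ⟨d, hd⟩

include hp hgr htop in
theorem alpha_le_linear : ∃ C, ∀ e : ℕ, alphaq I (p ^ e) ≤ C * p ^ e := by
  obtain ⟨C, hC⟩ := Aset_all p hp hgr htop
  refine ⟨C, fun e => ?_⟩
  obtain ⟨d, hd, hdle⟩ := hC e
  exact le_trans (Nat.sInf_le hd) hdle

include hp hgr htop in
theorem alpha_superadditive (e k : ℕ) :
    p ^ k * alphaq I (p ^ e) ≤ alphaq I (p ^ (e + k)) := by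
  obtain ⟨ι, mm, tt, Ψ, hmm, hΨ⟩ := exists_frobSys (K := K) (n := n) p hp k
  have hq'1 : 1 ≤ p ^ k := Nat.one_le_pow k p hp.pos
  have hmemα : alphaq I (p ^ (e + k)) ∈ Aset I (p ^ (e + k)) :=
    Nat.sInf_mem (Aset_ne p hp hgr htop (e + k))
  obtain ⟨f, hfh, hfcol, hfnot⟩ := hmemα
  have hfrob : frobPow I (p ^ (e + k)) = frobPow (frobPow I (p ^ e)) (p ^ k) :=
    (frobPow_frobPow p hp I e k).symm
  rw [hfrob] at hfnot
  rw [mem_frobPow_iff p hp hΨ] at hfnot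
  push_neg at hfnot
  obtain ⟨j, hj⟩ := hfnot
  have hj0 : Ψ f j ≠ 0 := by
    intro h0
    apply hj
    rw [h0]
    exact zero_mem _
  have hcoords : ∀ a ∈ I, a * Ψ f j ∈ frobPow I (p ^ e) := by
    intro a ha
    have hfa : f * a ∈ frobPow I (p ^ (e + k)) := by
      have := Submodule.mem_colon.1 hfcol a ha
      rwa [smul_eq_mul] at this
    have hfa2 : a ^ p ^ k * f ∈ frobPow I (p ^ (e + k)) := by
      have h3 : a ^ p ^ k * f = (f * a) * a ^ (p ^ k - 1) := by
        have h30 : p ^ k = 1 + (p ^ k - 1) := by omega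
        conv_lhs => rw [h30]
        rw [pow_add, pow_one]
        ring
      rw [h3]
      exact Ideal.mul_mem_right _ _ hfa
    rw [hfrob] at hfa2
    have h4 := (mem_frobPow_iff p hp hΨ _ _).1 hfa2 j
    rwa [coord_Fsmul p hp hΨ, Finsupp.smul_apply, smul_eq_mul] at h4
  obtain ⟨dj, hdjh, hdjeq⟩ := coord_homog p hp hmm hΨ hfh j hj0
  have hdjA : dj ∈ Aset I (p ^ e) := by
    refine ⟨Ψ f j, hdjh, ?_, hj⟩
    rw [Submodule.mem_colon]
    intro a ha
    rw [smul_eq_mul, mul_comm]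
    exact hcoords a ha
  have h1 : alphaq I (p ^ e) ≤ dj := Nat.sInf_le hdjA
  calc p ^ k * alphaq I (p ^ e) ≤ p ^ k * dj := Nat.mul_le_mul_left _ h1
  _ ≤ p ^ k * dj + tt j := Nat.le_add_right _ _
  _ = alphaq I (p ^ (e + k)) := hdjeq

include hp in
theorem colon_prime_mem_Ass {J : Ideal (MvPolynomial (Fin n) K)} {g : MvPolynomial (Fin n) K}
    (hpr : (J.colon (Ideal.span {g})).IsPrime) : J.colon (Ideal.span {g}) ∈ Ass J := by
  refine ⟨hpr, Ideal.Quotient.mk J g, ?_⟩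
  have key : (⊥ : Submodule (MvPolynomial (Fin n) K) (MvPolynomial (Fin n) K ⧸ J)).colon
      {Ideal.Quotient.mk J g} = J.colon (Ideal.span {g}) := by
    ext r
    rw [Submodule.mem_colon_singleton, Ideal.mem_colon_span_singleton, Submodule.mem_bot]
    rw [show (r • Ideal.Quotient.mk J g) = Ideal.Quotient.mk J (r * g) from rfl]
    rw [Ideal.Quotient.eq_zero_iff_mem]
  rw [key, hpr.radical]

include hp hgr htop hrad in
theorem vnum_step : ∃ C, ∀ e : ℕ,
    vnum (frobPow I (p ^ (e + 1))) ≤ p * alphaq I (p ^ e) + C ∧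
      (vnum (frobPow I (p ^ (e + 1))) ∈
        {d : ℕ | ∃ f : MvPolynomial (Fin n) K, f.IsHomogeneous d ∧
          ∃ 𝔭 ∈ Ass (frobPow I (p ^ (e + 1))), (frobPow I (p ^ (e + 1))).colon
            (Ideal.span {f}) = 𝔭}) := by
  classical
  have hfin := minimalPrimes_finite (K := K) (n := n) I
  choose z dz hzh hznot hzmul using
    fun (𝔭 : {x // x ∈ I.minimalPrimes}) => exists_z p hp hgr hrad 𝔭.2
  set C := hfin.toFinset.attach.sup
    (fun q => dz ⟨q.1, (Set.Finite.mem_toFinset hfin).1 q.2⟩) with hC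
  refine ⟨C, fun e => ?_⟩
  have hmemα : alphaq I (p ^ e) ∈ Aset I (p ^ e) :=
    Nat.sInf_mem (Aset_ne p hp hgr htop e)
  obtain ⟨f, hfh, hfcol, hfnot⟩ := hmemα
  obtain ⟨𝔭, h𝔭, hf𝔭⟩ := exists_minimalPrime_not_mem_frobPow p hp hrad e hfnot
  have h𝔭p : 𝔭.IsPrime := h𝔭.1.1
  set zz := z ⟨𝔭, h𝔭⟩ with hzz
  have hzznot := hznot ⟨𝔭, h𝔭⟩
  have hzzmul := hzmul ⟨𝔭, h𝔭⟩
  have hzzh := hzh ⟨𝔭, h𝔭⟩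
  have hJeq : frobPow (frobPow I (p ^ e)) (p ^ 1) = frobPow I (p ^ (e + 1)) :=
    frobPow_frobPow p hp I e 1
  have hcolon : (frobPow I (p ^ (e + 1))).colon (Ideal.span {f ^ p * zz}) = 𝔭 := by
    ext x
    rw [Ideal.mem_colon_span_singleton]
    constructor
    · intro hx
      have hmono : frobPow I (p ^ (e + 1)) ≤ frobPow (frobPow 𝔭 (p ^ e)) (p ^ 1) := by
        rw [← hJeq]
        exact frobPow_mono (frobPow_mono h𝔭.1.2 (p ^ e)) (p ^ 1)
      have h1 : (x * zz) * f ^ p ^ 1 ∈ frobPow (frobPow 𝔭 (p ^ e)) (p ^ 1) := by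
        apply hmono
        have : (x * zz) * f ^ p ^ 1 = x * (f ^ p * zz) := by
          rw [pow_one]
          ring
        rwa [this]
      have h2 := (kunz_colon p hp (frobPow 𝔭 (p ^ e)) 1 f (x * zz)).1 h1
      have h3 : (frobPow 𝔭 (p ^ e)).colon (Ideal.span {f}) ≤ 𝔭 := by
        intro c hc
        rw [Ideal.mem_colon_span_singleton] at hc
        exact frobPow_colon_le_prime p hp h𝔭p e hf𝔭 hc
      have h4 : x * zz ∈ frobPow 𝔭 (p ^ 1) := frobPow_mono h3 (p ^ 1) h2
      exact frobPow_colon_le_prime p hp h𝔭p 1 hzznot h4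
    · intro hx
      have h5 : zz * x ∈ frobPow I (p ^ 1) := hzzmul x hx
      have hu : ∀ a ∈ I, f * a ∈ frobPow I (p ^ e) := by
        intro a ha
        have := Submodule.mem_colon.1 hfcol a ha
        rwa [smul_eq_mul] at this
      have h6 := mul_frobPow (p := p) hu 1 _ h5
      rw [hJeq] at h6
      have h7 : x * (f ^ p * zz) = f ^ p ^ 1 * (zz * x) := by
        rw [pow_one]
        ring
      rwa [h7]
  have hprime : ((frobPow I (p ^ (e + 1))).colon (Ideal.span {f ^ p * zz})).IsPrime := by
    rw [hcolon]
    exact h𝔭p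
  have hAssmem : 𝔭 ∈ Ass (frobPow I (p ^ (e + 1))) := by
    rw [← hcolon]
    exact colon_prime_mem_Ass p hp hprime
  have hgh : (f ^ p * zz).IsHomogeneous (p * alphaq I (p ^ e) + dz ⟨𝔭, h𝔭⟩) := by
    have h8 : (f ^ p).IsHomogeneous (alphaq I (p ^ e) * p) := hfh.pow _
    have := h8.mul hzzh
    rwa [mul_comm (alphaq I (p ^ e)) p] at this
  have hdmem : (p * alphaq I (p ^ e) + dz ⟨𝔭, h𝔭⟩) ∈
      {d : ℕ | ∃ f : MvPolynomial (Fin n) K, f.IsHomogeneous d ∧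
        ∃ 𝔭 ∈ Ass (frobPow I (p ^ (e + 1))), (frobPow I (p ^ (e + 1))).colon
          (Ideal.span {f}) = 𝔭} :=
    ⟨f ^ p * zz, hgh, 𝔭, hAssmem, hcolon⟩
  constructor
  · refine le_trans (Nat.sInf_le hdmem) ?_
    apply Nat.add_le_add_left
    rw [hC]
    have hmem2 : (⟨𝔭, (Set.Finite.mem_toFinset hfin).2 h𝔭⟩ :
        {x // x ∈ hfin.toFinset}) ∈ hfin.toFinset.attach := Finset.mem_attach _ _
    exact Finset.le_sup (f := fun q : {x // x ∈ hfin.toFinset} => dz ⟨q.1, (Set.Finite.mem_toFinset hfin).1 q.2⟩) hmem2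
  · exact Nat.sInf_mem ⟨_, hdmem⟩

include hp hgr htop in
theorem alpha_le_vnum (e : ℕ)
    (hne : (vnum (frobPow I (p ^ e)) ∈
        {d : ℕ | ∃ f : MvPolynomial (Fin n) K, f.IsHomogeneous d ∧
          ∃ 𝔭 ∈ Ass (frobPow I (p ^ e)), (frobPow I (p ^ e)).colon
            (Ideal.span {f}) = 𝔭})) :
    alphaq I (p ^ e) ≤ vnum (frobPow I (p ^ e)) := by
  have hv : vnum (frobPow I (p ^ e)) ∈ _ := Nat.sInf_mem ⟨_, hne⟩
  obtain ⟨f, hfh, 𝔭, h𝔭Ass, hcolon⟩ := hv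
  have hprime : 𝔭.IsPrime := h𝔭Ass.1
  have hfnot : f ∉ frobPow I (p ^ e) := by
    intro h
    have h1 : (1 : MvPolynomial (Fin n) K) ∈ (frobPow I (p ^ e)).colon (Ideal.span {f}) := by
      rw [Ideal.mem_colon_span_singleton, one_mul]
      exact h
    rw [hcolon] at h1
    exact hprime.ne_top ((Ideal.eq_top_iff_one _).2 h1)
  have hcol : f ∈ (frobPow I (p ^ e)).colon I := by
    rw [Submodule.mem_colon]
    intro a ha
    have h1 : a ^ p ^ e ∈ 𝔭 := by
      rw [← hcolon, Ideal.mem_colon_span_singleton]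
      exact Ideal.mul_mem_right _ _ (mem_frobPow_of_mem ha _)
    have h2 : a ∈ 𝔭 := hprime.mem_of_pow_mem _ h1
    rw [← hcolon, Ideal.mem_colon_span_singleton] at h2
    rw [smul_eq_mul, mul_comm]
    exact h2
  exact Nat.sInf_le ⟨f, hfh, hcol, hfnot⟩

end Main

/-! #### Part 6 : the analytic endgame -/

theorem analysis {p : ℕ} (hp2 : 2 ≤ p) (a w : ℕ → ℕ) {C1 C2 : ℕ}
    (h1 : ∀ e k, p ^ k * a e ≤ a (e + k))
    (h2 : ∀ e, a e ≤ C1 * p ^ e)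
    (h3 : ∀ e, w (e + 1) ≤ p * a e + C2)
    (h4 : ∀ e, a (e + 1) ≤ w (e + 1)) :
    ∃ L : ℝ,
      Filter.Tendsto (fun e : ℕ => (a e : ℝ) / (p ^ e : ℝ)) Filter.atTop (nhds L) ∧
      Filter.Tendsto (fun e : ℕ => (w e : ℝ) / (p ^ e : ℝ)) Filter.atTop (nhds L) := by
  have hp0 : (0 : ℝ) < p := by
    have : (0 : ℕ) < p := lt_of_lt_of_le two_pos hp2
    exact_mod_cast this
  have hp1 : (1 : ℝ) < p := by
    have : (1 : ℕ) < p := hp2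
    exact_mod_cast this
  have hpe : ∀ e : ℕ, (0 : ℝ) < (p : ℝ) ^ e := fun e => pow_pos hp0 e
  set A : ℕ → ℝ := fun e => (a e : ℝ) / (p : ℝ) ^ e with hA
  set W : ℕ → ℝ := fun e => (w e : ℝ) / (p : ℝ) ^ e with hW
  have hmono : Monotone A := by
    apply monotone_nat_of_le_succ
    intro e
    rw [hA]
    rw [div_le_div_iff₀ (hpe e) (hpe (e + 1))]
    have h := h1 e 1
    rw [pow_one] at h
    have h' : (p : ℝ) * a e ≤ a (e + 1) := by exact_mod_cast h
    calc (a e : ℝ) * (p : ℝ) ^ (e + 1) = ((p : ℝ) * a e) * (p : ℝ) ^ e := by ring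
    _ ≤ (a (e + 1) : ℝ) * (p : ℝ) ^ e := by
        apply mul_le_mul_of_nonneg_right h' (le_of_lt (hpe e))
  have hbdd : ∀ e, A e ≤ C1 := by
    intro e
    rw [hA, div_le_iff₀ (hpe e)]
    have := h2 e
    calc (a e : ℝ) ≤ (C1 : ℝ) * (p : ℝ) ^ e := by exact_mod_cast this
    _ = (C1 : ℝ) * (p : ℝ) ^ e := rfl
  have hbdd' : BddAbove (Set.range A) := by
    refine ⟨C1, ?_⟩
    rintro x ⟨e, rfl⟩
    exact hbdd e
  have hTA : Filter.Tendsto A Filter.atTop (nhds (⨆ e, A e)) :=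
    tendsto_atTop_ciSup hmono hbdd'
  set L : ℝ := ⨆ e, A e with hL
  have hup : ∀ e, W (e + 1) ≤ A e + (C2 : ℝ) / (p : ℝ) ^ (e + 1) := by
    intro e
    rw [hW, hA]
    have h := h3 e
    have h' : (w (e + 1) : ℝ) ≤ (p : ℝ) * a e + C2 := by exact_mod_cast h
    rw [div_le_iff₀ (hpe (e + 1))]
    calc (w (e + 1) : ℝ) ≤ (p : ℝ) * a e + C2 := h'
    _ = ((a e : ℝ) / (p : ℝ) ^ e + (C2 : ℝ) / (p : ℝ) ^ (e + 1)) * (p : ℝ) ^ (e + 1) := by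
        field_simp
        ring
  have hlow : ∀ e, A (e + 1) ≤ W (e + 1) := by
    intro e
    simp only [hW, hA]
    gcongr
    exact_mod_cast h4 e
  have hzero : Filter.Tendsto (fun e : ℕ => (C2 : ℝ) / (p : ℝ) ^ (e + 1))
      Filter.atTop (nhds 0) := by
    apply Filter.Tendsto.div_atTop tendsto_const_nhds
    have hpow : Filter.Tendsto (fun e : ℕ => (p : ℝ) ^ e) Filter.atTop Filter.atTop :=
      tendsto_pow_atTop_atTop_of_one_lt hp1
    exact hpow.comp (Filter.tendsto_add_atTop_nat 1)
  have hupT : Filter.Tendsto (fun e : ℕ => A e + (C2 : ℝ) / (p : ℝ) ^ (e + 1))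
      Filter.atTop (nhds L) := by
    have := hTA.add hzero
    simpa using this
  have hlowT : Filter.Tendsto (fun e : ℕ => A (e + 1)) Filter.atTop (nhds L) :=
    (Filter.tendsto_add_atTop_iff_nat 1).2 hTA
  have hWT1 : Filter.Tendsto (fun e : ℕ => W (e + 1)) Filter.atTop (nhds L) := by
    apply tendsto_of_tendsto_of_tendsto_of_le_of_le hlowT hupT
    · intro e; exact hlow e
    · intro e; exact hup e
  have hWT : Filter.Tendsto W Filter.atTop (nhds L) :=
    (Filter.tendsto_add_atTop_iff_nat 1).1 hWT1
  exact ⟨L, hTA, hWT⟩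

end Stmt18Aux

theorem stmt18 {K : Type*} [Field K] {n : ℕ} (p : ℕ) (hp : p.Prime) [CharP K p]
    (I : Ideal (MvPolynomial (Fin n) K)) (hgr : IsGraded I) (htop : I ≠ ⊤) (hbot : I ≠ ⊥)
    (hrad : I.IsRadical) :
    ∃ L : ℝ,
      Filter.Tendsto (fun e : ℕ => (alphaq I (p ^ e) : ℝ) / (p ^ e : ℝ))
        Filter.atTop (nhds L) ∧
      Filter.Tendsto (fun e : ℕ => (vnum (frobPow I (p ^ e)) : ℝ) / (p ^ e : ℝ))
        Filter.atTop (nhds L) := by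
  classical
  obtain ⟨C1, hC1⟩ := Stmt18Aux.alpha_le_linear p hp hgr htop
  obtain ⟨C2, hC2⟩ := Stmt18Aux.vnum_step p hp hgr htop hrad
  have h1 := Stmt18Aux.alpha_superadditive p hp hgr htop
  have h4 : ∀ e, alphaq I (p ^ (e + 1)) ≤ vnum (frobPow I (p ^ (e + 1))) := fun e =>
    Stmt18Aux.alpha_le_vnum p hp hgr htop (e + 1) (hC2 e).2
  obtain ⟨L, hA, hW⟩ := Stmt18Aux.analysis hp.two_le (fun e => alphaq I (p ^ e))
    (fun e => vnum (frobPow I (p ^ e))) h1 hC1 (fun e => (hC2 e).1) h4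
  exact ⟨L, hA, hW⟩

end
end
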